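/- arXiv:math/0411164 — 4 statements merged into one kernel-verified Lean document; each statement's English description precedes it below -/
import Mathlib

section
/- Assume H is infinite and let f ∈ L²(X, μ) be not μ-a.e. constant. Then the set F_f = {h ∈ H : f ∘ π_h = f μ-a.e.} is finite, and there exists a constant C > 0 such that ‖f − f ∘ π_h‖_{L²(μ)} ≥ C for every h ∈ H \ F_f. -/
open MeasureTheory Filter

/-- The Bernoulli shift action of a group `H` on the product space `∏_{h ∈ H} X₀`:
`(π_h x)_{h'} = x_{h⁻¹ h'}`. -/
def bernoulliShift {H X₀ : Type*} [Group H] (h : H) (x : H → X₀) : H → X₀ :=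
  fun h' => x (h⁻¹ * h')

/-- `μ` is the product probability measure `∏_{h ∈ H} μ₀` on `H → X₀`, characterized by its
values on measurable cylinder sets. -/
def IsBernoulliProduct {H X₀ : Type*} [MeasurableSpace X₀] (μ₀ : Measure X₀)
    (μ : Measure (H → X₀)) : Prop :=
  IsProbabilityMeasure μ ∧
    ∀ (s : Finset H) (E : H → Set X₀), (∀ h ∈ s, MeasurableSet (E h)) →
      μ {x : H → X₀ | ∀ h ∈ s, x h ∈ E h} = ∏ h ∈ s, μ₀ (E h)

section BP

variable {H X₀ : Type*} [MeasurableSpace X₀]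

/-- Boxes (cylinder sets defined by finitely many coordinate constraints). -/
def bpBoxes (H X₀ : Type*) [MeasurableSpace X₀] : Set (Set (H → X₀)) :=
  {A | ∃ (s : Finset H) (E : H → Set X₀), (∀ h ∈ s, MeasurableSet (E h)) ∧
      A = {x | ∀ h ∈ s, x h ∈ E h}}

lemma bp_box_measurable {s : Finset H} {E : H → Set X₀} (hE : ∀ h ∈ s, MeasurableSet (E h)) :
    MeasurableSet {x : H → X₀ | ∀ h ∈ s, x h ∈ E h} := by
  have : {x : H → X₀ | ∀ h ∈ s, x h ∈ E h} = ⋂ h ∈ (s : Set H), (fun x => x h) ⁻¹' E h := by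
    ext x; simp
  rw [this]
  exact MeasurableSet.biInter s.countable_toSet fun h hh =>
    measurable_pi_apply h (hE h (by simpa using hh))

lemma bp_generateFrom_boxes :
    (MeasurableSpace.pi : MeasurableSpace (H → X₀)) = .generateFrom (bpBoxes H X₀) := by
  refine le_antisymm (iSup_le fun h => ?_) (MeasurableSpace.generateFrom_le ?_)
  · refine Measurable.comap_le (fun E hE => ?_)
    refine MeasurableSpace.measurableSet_generateFrom ⟨{h}, fun _ => E, by simpa using hE, ?_⟩
    ext x; simp
  · rintro A ⟨s, E, hE, rfl⟩
    exact bp_box_measurable hE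

lemma bp_isPiSystem_boxes : IsPiSystem (bpBoxes H X₀) := by
  classical
  rintro A ⟨s, E, hE, rfl⟩ B ⟨t, F, hF, rfl⟩ -
  refine ⟨s ∪ t, fun h => (if h ∈ s then E h else Set.univ) ∩ (if h ∈ t then F h else Set.univ),
    ?_, ?_⟩
  · intro h _
    apply MeasurableSet.inter <;> split_ifs with h' <;>
      first | exact hE _ h' | exact hF _ h' | exact MeasurableSet.univ
  · ext x
    simp only [Set.mem_inter_iff, Set.mem_setOf_eq, Finset.mem_union]
    constructor
    · rintro ⟨h1, h2⟩ h _
      constructor <;> split_ifs with h' <;>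
        first | exact h1 _ h' | exact h2 _ h' | exact Set.mem_univ _
    · intro hx
      constructor <;> intro h hh
      · have := (hx h (Or.inl hh)).1; rwa [if_pos hh] at this
      · have := (hx h (Or.inr hh)).2; rwa [if_pos hh] at this

variable {μ₀ : Measure X₀} {μ ν : Measure (H → X₀)}

lemma IsBernoulliProduct.unique (hμ : IsBernoulliProduct μ₀ μ) (hν : IsBernoulliProduct μ₀ ν) :
    μ = ν := by
  have h1 : IsProbabilityMeasure μ := hμ.1
  have h2 : IsProbabilityMeasure ν := hν.1
  refine ext_of_generate_finite (bpBoxes H X₀) bp_generateFrom_boxes bp_isPiSystem_boxes ?_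
    (by simp)
  rintro A ⟨s, E, hE, rfl⟩
  rw [hμ.2 s E hE, hν.2 s E hE]

variable [Group H]

lemma bp_measurable_shift (h : H) : Measurable (bernoulliShift (X₀ := X₀) h) :=
  measurable_pi_lambda _ fun _ => measurable_pi_apply _

lemma IsBernoulliProduct.measurePreserving (hμ : IsBernoulliProduct μ₀ μ) (h : H) :
    MeasurePreserving (bernoulliShift h) μ μ := by
  classical
  have h1 : IsProbabilityMeasure μ := hμ.1
  refine ⟨bp_measurable_shift h, ?_⟩
  refine IsBernoulliProduct.unique ⟨?_, ?_⟩ hμ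
  · exact Measure.isProbabilityMeasure_map (bp_measurable_shift h).aemeasurable
  · intro s E hE
    rw [Measure.map_apply (bp_measurable_shift h) (bp_box_measurable hE)]
    have hpre : bernoulliShift h ⁻¹' {x | ∀ i ∈ s, x i ∈ E i}
        = {x : H → X₀ | ∀ j ∈ s.image (fun i => h⁻¹ * i), x j ∈ E (h * j)} := by
      ext x
      simp only [Set.mem_preimage, Set.mem_setOf_eq, Finset.mem_image, bernoulliShift]
      constructor
      · rintro hx j ⟨i, hi, rfl⟩
        rw [mul_inv_cancel_left]
        exact hx i hi
      · intro hx i hi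
        have := hx (h⁻¹ * i) ⟨i, hi, rfl⟩
        rwa [mul_inv_cancel_left] at this
    rw [hpre, hμ.2 _ _ ?_]
    · rw [Finset.prod_image (fun a _ b _ hab => by simpa using hab)]
      exact Finset.prod_congr rfl fun i _ => by rw [mul_inv_cancel_left]
    · rintro j hj
      obtain ⟨i, hi, rfl⟩ := Finset.mem_image.mp hj
      rw [mul_inv_cancel_left]
      exact hE i hi

end BP

section BP2

open ProbabilityTheory

variable {H X₀ : Type*} [MeasurableSpace X₀]

/-- Restriction to finitely many coordinates. -/
def bpRestr (s : Finset H) : (H → X₀) → ((i : s) → X₀) := fun x i => x i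

lemma bp_measurable_restr (s : Finset H) : Measurable (bpRestr (X₀ := X₀) s) :=
  measurable_pi_lambda _ fun _ => measurable_pi_apply _

open scoped Classical in
/-- Extension of a family of sets indexed by a finset to a global family. -/
noncomputable def bpExt (s : Finset H) (E : (i : s) → Set X₀) : H → Set X₀ :=
  fun h => if hh : h ∈ s then E ⟨h, hh⟩ else Set.univ

lemma bpExt_measurable {s : Finset H} {E : (i : s) → Set X₀}
    (hE : ∀ i, MeasurableSet (E i)) (h : H) : MeasurableSet (bpExt s E h) := by
  unfold bpExt; split
  · exact hE _
  · exact MeasurableSet.univ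

lemma bpRestr_preimage (s : Finset H) (E : (i : s) → Set X₀) :
    bpRestr s ⁻¹' Set.pi Set.univ E = {x : H → X₀ | ∀ h ∈ s, x h ∈ bpExt s E h} := by
  ext x
  simp only [Set.mem_preimage, Set.mem_univ_pi, Set.mem_setOf_eq, bpExt, bpRestr]
  constructor
  · intro hx h hh; rw [dif_pos hh]; exact hx ⟨h, hh⟩
  · intro hx i; have := hx i i.2; rwa [dif_pos i.2] at this

variable {μ₀ : Measure X₀} {μ : Measure (H → X₀)}

lemma IsBernoulliProduct.indepFun_restr (hμ : IsBernoulliProduct μ₀ μ) {s t : Finset H}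
    (hst : Disjoint s t) :
    IndepFun (bpRestr (X₀ := X₀) s) (bpRestr (X₀ := X₀) t) μ := by
  classical
  have h1 : IsProbabilityMeasure μ := hμ.1
  have key : ∀ u : Finset H,
      MeasurableSpace.comap (bpRestr (X₀ := X₀) u) MeasurableSpace.pi
        = MeasurableSpace.generateFrom
          {A | ∃ B ∈ (Set.pi Set.univ ''
              Set.pi Set.univ fun (_ : u) => {C : Set X₀ | MeasurableSet C}),
            bpRestr (X₀ := X₀) u ⁻¹' B = A} := by
    intro u
    rw [← generateFrom_pi, MeasurableSpace.comap_generateFrom]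
    rfl
  have hmeas : ∀ (u : Finset H) (A : Set (H → X₀)),
      (∃ B ∈ (Set.pi Set.univ '' Set.pi Set.univ fun (_ : u) => {C : Set X₀ | MeasurableSet C}),
        bpRestr (X₀ := X₀) u ⁻¹' B = A) →
      ∃ E : (i : u) → Set X₀, (∀ i, MeasurableSet (E i)) ∧
        A = {x : H → X₀ | ∀ h ∈ u, x h ∈ bpExt u E h} := by
    rintro u A ⟨B, ⟨E, hE, rfl⟩, rfl⟩
    exact ⟨E, fun i => hE i (Set.mem_univ i), (bpRestr_preimage u E)⟩
  refine IndepSets.indep ((bp_measurable_restr s).comap_le) ((bp_measurable_restr t).comap_le)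
    (isPiSystem_pi.comap _) (isPiSystem_pi.comap _) (key s) (key t) ?_
  rw [IndepSets_iff]
  rintro A B hA hB
  obtain ⟨E, hE, rfl⟩ := hmeas s A hA
  obtain ⟨F, hF, rfl⟩ := hmeas t B hB
  have hinter : {x : H → X₀ | ∀ h ∈ s, x h ∈ bpExt s E h}
        ∩ {x : H → X₀ | ∀ h ∈ t, x h ∈ bpExt t F h}
      = {x : H → X₀ | ∀ h ∈ s ∪ t, x h ∈ bpExt s E h ∩ bpExt t F h} := by
    ext x
    simp only [Set.mem_inter_iff, Set.mem_setOf_eq, Finset.mem_union]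
    constructor
    · rintro ⟨hx1, hx2⟩ h hh
      constructor
      · by_cases hs' : h ∈ s
        · exact hx1 h hs'
        · simp only [bpExt, dif_neg hs']; exact Set.mem_univ _
      · by_cases ht' : h ∈ t
        · exact hx2 h ht'
        · simp only [bpExt, dif_neg ht']; exact Set.mem_univ _
    · intro hx
      exact ⟨fun h hh => (hx h (Or.inl hh)).1, fun h hh => (hx h (Or.inr hh)).2⟩
  rw [hinter, hμ.2 _ _ (fun h _ => (bpExt_measurable hE h).inter (bpExt_measurable hF h)),
    hμ.2 _ _ (fun h _ => bpExt_measurable hE h), hμ.2 _ _ (fun h _ => bpExt_measurable hF h),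
    Finset.prod_union hst]
  congr 1
  · refine Finset.prod_congr rfl fun h hh => ?_
    have : bpExt t F h = Set.univ := dif_neg (Finset.disjoint_left.mp hst hh)
    rw [this, Set.inter_univ]
  · refine Finset.prod_congr rfl fun h hh => ?_
    have : bpExt s E h = Set.univ := dif_neg (Finset.disjoint_right.mp hst hh)
    rw [this, Set.univ_inter]

/-- Integral of product of independent integrable complex random variables. -/
lemma bp_indepFun_integral_mul {Ω : Type*} [MeasurableSpace Ω] {μ : Measure Ω} {u w : Ω → ℂ}
    (h : IndepFun u w μ) (hu : Integrable u μ) (hw : Integrable w μ) :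
    ∫ x, u x * w x ∂μ = (∫ x, u x ∂μ) * ∫ x, w x ∂μ := by
  have hmul : Integrable (fun x => u x * w x) μ := by
    exact h.integrable_mul hu hw
  have hur : Integrable (fun x => (u x).re) μ := by simpa using hu.re
  have hui : Integrable (fun x => (u x).im) μ := by simpa using hu.im
  have hwr : Integrable (fun x => (w x).re) μ := by simpa using hw.re
  have hwi : Integrable (fun x => (w x).im) μ := by simpa using hw.im
  have hp11 : Integrable (fun x => (u x).re * (w x).re) μ := by
    exact
      (h.comp Complex.measurable_re Complex.measurable_re).integrable_mul hur hwr
  have hp12 : Integrable (fun x => (u x).re * (w x).im) μ := by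
    exact
      (h.comp Complex.measurable_re Complex.measurable_im).integrable_mul hur hwi
  have hp21 : Integrable (fun x => (u x).im * (w x).re) μ := by
    exact
      (h.comp Complex.measurable_im Complex.measurable_re).integrable_mul hui hwr
  have hp22 : Integrable (fun x => (u x).im * (w x).im) μ := by
    exact
      (h.comp Complex.measurable_im Complex.measurable_im).integrable_mul hui hwi
  have h11 : ∫ x, (u x).re * (w x).re ∂μ = (∫ x, (u x).re ∂μ) * ∫ x, (w x).re ∂μ := by
    simpa [Function.comp_def, Pi.mul_apply] using
      (h.comp Complex.measurable_re Complex.measurable_re).integral_fun_mul_eq_mul_integral hur.1 hwr.1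
  have h12 : ∫ x, (u x).re * (w x).im ∂μ = (∫ x, (u x).re ∂μ) * ∫ x, (w x).im ∂μ := by
    simpa [Function.comp_def, Pi.mul_apply] using
      (h.comp Complex.measurable_re Complex.measurable_im).integral_fun_mul_eq_mul_integral hur.1 hwi.1
  have h21 : ∫ x, (u x).im * (w x).re ∂μ = (∫ x, (u x).im ∂μ) * ∫ x, (w x).re ∂μ := by
    simpa [Function.comp_def, Pi.mul_apply] using
      (h.comp Complex.measurable_im Complex.measurable_re).integral_fun_mul_eq_mul_integral hui.1 hwr.1
  have h22 : ∫ x, (u x).im * (w x).im ∂μ = (∫ x, (u x).im ∂μ) * ∫ x, (w x).im ∂μ := by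
    simpa [Function.comp_def, Pi.mul_apply] using
      (h.comp Complex.measurable_im Complex.measurable_im).integral_fun_mul_eq_mul_integral hui.1 hwi.1
  have hreu : (∫ x, u x ∂μ).re = ∫ x, (u x).re ∂μ := by simpa using (integral_re hu).symm
  have himu : (∫ x, u x ∂μ).im = ∫ x, (u x).im ∂μ := by simpa using (integral_im hu).symm
  have hrew : (∫ x, w x ∂μ).re = ∫ x, (w x).re ∂μ := by simpa using (integral_re hw).symm
  have himw : (∫ x, w x ∂μ).im = ∫ x, (w x).im ∂μ := by simpa using (integral_im hw).symm
  apply Complex.ext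
  · have hre : (∫ x, u x * w x ∂μ).re = ∫ x, (u x * w x).re ∂μ := by
      simpa using (integral_re hmul).symm
    rw [hre]
    simp_rw [Complex.mul_re]
    rw [integral_sub hp11 hp22, h11, h22, hreu, hrew, himu, himw]
  · have him : (∫ x, u x * w x ∂μ).im = ∫ x, (u x * w x).im ∂μ := by
      simpa using (integral_im hmul).symm
    rw [him]
    simp_rw [Complex.mul_im]
    rw [integral_add hp12 hp21, h12, h21, hreu, hrew, himu, himw]

end BP2

section BP3

variable {H X₀ : Type*} [MeasurableSpace X₀]

/-- Sets depending measurably on finitely many coordinates. -/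
def bpAlg (H X₀ : Type*) [MeasurableSpace X₀] : Set (Set (H → X₀)) :=
  {A | ∃ (s : Finset H) (B : Set ((i : s) → X₀)), MeasurableSet B ∧ A = bpRestr s ⁻¹' B}

/-- The projection between restrictions for nested finsets. -/
def bpProj {s t : Finset H} (hst : s ⊆ t) : ((i : t) → X₀) → ((i : s) → X₀) :=
  fun y i => y ⟨i.1, hst i.2⟩

lemma bp_measurable_proj {s t : Finset H} (hst : s ⊆ t) :
    Measurable (bpProj (X₀ := X₀) hst) :=
  measurable_pi_lambda _ fun _ => measurable_pi_apply _

lemma bpProj_restr {s t : Finset H} (hst : s ⊆ t) (x : H → X₀) :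
    bpProj (X₀ := X₀) hst (bpRestr t x) = bpRestr s x := rfl

lemma bpAlg_isSetAlgebra : MeasureTheory.IsSetAlgebra (bpAlg H X₀) where
  empty_mem := ⟨∅, ∅, MeasurableSet.empty, by simp⟩
  compl_mem := by
    rintro A ⟨s, B, hB, rfl⟩
    exact ⟨s, Bᶜ, hB.compl, by simp⟩
  union_mem := by
    rintro A A' ⟨s, B, hB, rfl⟩ ⟨t, B', hB', rfl⟩
    classical
    refine ⟨s ∪ t, bpProj Finset.subset_union_left ⁻¹' B ∪ bpProj Finset.subset_union_right ⁻¹' B',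
      ((bp_measurable_proj _) hB).union ((bp_measurable_proj _) hB'), ?_⟩
    ext x
    simp [bpProj_restr, Set.mem_union]

lemma bpAlg_generateFrom :
    (MeasurableSpace.pi : MeasurableSpace (H → X₀)) = .generateFrom (bpAlg H X₀) := by
  refine le_antisymm (iSup_le fun h => ?_) (MeasurableSpace.generateFrom_le ?_)
  · refine Measurable.comap_le (fun E hE => ?_)
    refine MeasurableSpace.measurableSet_generateFrom
      ⟨{h}, (fun y => y ⟨h, Finset.mem_singleton_self h⟩) ⁻¹' E,
        (measurable_pi_apply _) hE, ?_⟩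
    rfl
  · rintro A ⟨s, B, hB, rfl⟩
    exact (bp_measurable_restr s) hB

lemma bpAlg_measureDense {μ₀ : Measure X₀} {μ : Measure (H → X₀)}
    (hμ : IsBernoulliProduct μ₀ μ) : μ.MeasureDense (bpAlg H X₀) := by
  have : IsProbabilityMeasure μ := hμ.1
  exact MeasureTheory.Measure.MeasureDense.of_generateFrom_isSetAlgebra_finite μ
    bpAlg_isSetAlgebra bpAlg_generateFrom

end BP3

open scoped ENNReal

set_option maxHeartbeats 1000000

local notation "⟪" x ", " y "⟫" => @inner ℂ _ _ x y

/-- If `H` is infinite and `f ∈ L²(X, μ)` is not a.e. constant, then the set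
`F_f = {h ∈ H : f ∘ π_h = f a.e.}` is finite, and there is `C > 0` with
`‖f - f ∘ π_h‖₂ ≥ C` for every `h ∉ F_f`. -/
theorem stmt_3 {H X₀ : Type*} [Group H] [Countable H] [Infinite H]
    [MeasurableSpace X₀] (μ₀ : Measure X₀) [IsProbabilityMeasure μ₀]
    (μ : Measure (H → X₀)) (hμ : IsBernoulliProduct μ₀ μ)
    (f : (H → X₀) → ℂ) (hf : MemLp f 2 μ)
    (hfc : ¬ ∃ c : ℂ, f =ᵐ[μ] fun _ => c) :
    Set.Finite {h : H | (fun x => f (bernoulliShift h x)) =ᵐ[μ] f} ∧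
      ∃ C : ℝ, 0 < C ∧ ∀ h : H, h ∉ {h : H | (fun x => f (bernoulliShift h x)) =ᵐ[μ] f} →
        ENNReal.ofReal C ≤ eLpNorm (f - fun x => f (bernoulliShift h x)) 2 μ := by
  classical
  haveI hPμ : IsProbabilityMeasure μ := hμ.1
  haveI f1 : Fact ((1:ℝ≥0∞) ≤ 2) := ⟨one_le_two⟩
  haveI f2 : Fact ((2:ℝ≥0∞) ≠ ⊤) := ⟨by simp⟩
  set F : Lp ℂ 2 μ := hf.toLp f with hFdef
  have hcoeF : (F : (H → X₀) → ℂ) =ᵐ[μ] f := MemLp.coeFn_toLp hf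
  let T : H → (Lp ℂ 2 μ →+ Lp ℂ 2 μ) := fun h =>
    Lp.compMeasurePreserving (bernoulliShift h) (hμ.measurePreserving h)
  have hTnorm : ∀ (h : H) (G : Lp ℂ 2 μ), ‖T h G‖ = ‖G‖ := fun h G =>
    Lp.norm_compMeasurePreserving G _
  have hTcoe : ∀ (h : H) (G : Lp ℂ 2 μ), (T h G : (H → X₀) → ℂ)
      =ᵐ[μ] (G : (H → X₀) → ℂ) ∘ (bernoulliShift h) :=
    fun h G => Lp.coeFn_compMeasurePreserving G _
  have hTae : ∀ (h : H) (G : Lp ℂ 2 μ) (g : (H → X₀) → ℂ), (G : (H → X₀) → ℂ) =ᵐ[μ] g →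
      (T h G : (H → X₀) → ℂ) =ᵐ[μ] fun x => g (bernoulliShift h x) := by
    intro h G g hg
    refine (hTcoe h G).trans ?_
    exact ae_eq_comp (f := bernoulliShift h) (bp_measurable_shift h).aemeasurable
      (by rwa [(hμ.measurePreserving h).map_eq])
  have hdiff : ∀ h : H, eLpNorm (f - fun x => f (bernoulliShift h x)) 2 μ
      = ENNReal.ofReal ‖F - T h F‖ := by
    intro h
    have hae : (f - fun x => f (bernoulliShift h x)) =ᵐ[μ] (F - T h F : Lp ℂ 2 μ) := by
      filter_upwards [hcoeF, hTae h F f hcoeF, Lp.coeFn_sub F (T h F)] with x h1 h2 h3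
      simp only [Pi.sub_apply, h3, h1, h2]
    rw [eLpNorm_congr_ae hae, Lp.norm_def, ENNReal.ofReal_toReal (Lp.eLpNorm_ne_top _)]
  have hmemiff : ∀ h : H, ((fun x => f (bernoulliShift h x)) =ᵐ[μ] f) ↔ ‖F - T h F‖ = 0 := by
    intro h
    constructor
    · intro hh
      have h0 : (f - fun x => f (bernoulliShift h x)) =ᵐ[μ] (0 : (H → X₀) → ℂ) := by
        filter_upwards [hh] with x hx
        simp only [Pi.sub_apply, Pi.zero_apply, hx, sub_self]
      have h1 := hdiff h
      rw [eLpNorm_congr_ae h0, eLpNorm_zero] at h1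
      have h2 := ENNReal.ofReal_eq_zero.mp h1.symm
      exact le_antisymm h2 (norm_nonneg _)
    · intro hh
      have hFT : F = T h F := sub_eq_zero.mp (norm_eq_zero.mp hh)
      calc (fun x => f (bernoulliShift h x)) =ᵐ[μ] (T h F : (H → X₀) → ℂ) :=
            (hTae h F f hcoeF).symm
        _ = (F : (H → X₀) → ℂ) := by rw [← hFT]
        _ =ᵐ[μ] f := hcoeF
  -- the constant function 1
  have honeMem : MemLp (fun _ : H → X₀ => (1:ℂ)) 2 μ := memLp_const 1
  set one : Lp ℂ 2 μ := honeMem.toLp _ with honedef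
  have hone_coe : (one : (H → X₀) → ℂ) =ᵐ[μ] fun _ => (1:ℂ) := MemLp.coeFn_toLp _
  have hint : ∀ G : Lp ℂ 2 μ, Integrable (G : (H → X₀) → ℂ) μ :=
    fun G => (Lp.memLp G).integrable one_le_two
  have hinner_one : ∀ G : Lp ℂ 2 μ, ⟪one, G⟫ = ∫ x, (G : (H → X₀) → ℂ) x ∂μ := by
    intro G
    rw [MeasureTheory.L2.inner_def]
    refine integral_congr_ae ?_
    filter_upwards [hone_coe] with x hx
    rw [RCLike.inner_apply, hx]
    simp
  have hone_norm : ‖one‖ = 1 := by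
    have h1 : RCLike.re ⟪one, one⟫ = ‖one‖ ^ 2 := @inner_self_eq_norm_sq ℂ _ _ _ _ one
    have h2 : ⟪one, one⟫ = 1 := by
      rw [hinner_one one, integral_congr_ae hone_coe]
      simp
    rw [h2] at h1
    simp only [RCLike.one_re] at h1
    nlinarith [norm_nonneg one]
  set m : ℂ := ⟪one, F⟫ with hmdef
  have hm_le : ‖m‖ ≤ ‖F‖ := by
    calc ‖m‖ ≤ ‖one‖ * ‖F‖ := norm_inner_le_norm one F
      _ = ‖F‖ := by rw [hone_norm, one_mul]
  have hVid : ‖F - m • one‖ ^ 2 = ‖F‖ ^ 2 - ‖m‖ ^ 2 := by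
    have hexp : ‖F - m • one‖ ^ 2
        = ‖F‖ ^ 2 - 2 * RCLike.re ⟪F, m • one⟫ + ‖m • one‖ ^ 2 :=
      @norm_sub_sq ℂ _ _ _ _ F (m • one)
    have h1 : ⟪F, m • one⟫ = m * (starRingEnd ℂ) m := by
      rw [inner_smul_right]
      congr 1
      rw [← inner_conj_symm]
    have h2 : RCLike.re ⟪F, m • one⟫ = ‖m‖ ^ 2 := by
      rw [h1, Complex.mul_conj]
      simp [Complex.normSq_eq_norm_sq, ← Complex.ofReal_pow]
    rw [hexp, h2, norm_smul, hone_norm, mul_one]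
    ring
  have hV_pos : 0 < ‖F - m • one‖ ^ 2 := by
    have hne : F - m • one ≠ 0 := by
      intro h0
      apply hfc
      refine ⟨m, ?_⟩
      have hFm : F = m • one := by rwa [sub_eq_zero] at h0
      calc f =ᵐ[μ] (F : (H → X₀) → ℂ) := hcoeF.symm
        _ = ((m • one : Lp ℂ 2 μ) : (H → X₀) → ℂ) := by rw [hFm]
        _ =ᵐ[μ] fun _ => m := by
          filter_upwards [Lp.coeFn_smul m one, hone_coe] with x h1 h2
          rw [h1]
          simp [h2]
    have := norm_pos_iff.mpr hne
    positivity
  set V : ℝ := ‖F - m • one‖ ^ 2 with hVdef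
  set R : ℝ := ‖F‖ with hRdef
  -- density of finitely-based functions
  let Q : Lp ℂ 2 μ → Prop := fun G => ∃ (s : Finset H) (ψ : ((i : s) → X₀) → ℂ),
      Measurable ψ ∧ (G : (H → X₀) → ℂ) =ᵐ[μ] fun x => ψ (bpRestr s x)
  let W : Submodule ℂ (Lp ℂ 2 μ) :=
    { carrier := {G | Q G}
      add_mem' := by
        rintro G₁ G₂ ⟨s₁, ψ₁, hψ₁, hae₁⟩ ⟨s₂, ψ₂, hψ₂, hae₂⟩
        refine ⟨s₁ ∪ s₂, fun y => ψ₁ (bpProj Finset.subset_union_left y)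
            + ψ₂ (bpProj Finset.subset_union_right y),
          (hψ₁.comp (bp_measurable_proj _)).add (hψ₂.comp (bp_measurable_proj _)), ?_⟩
        filter_upwards [Lp.coeFn_add G₁ G₂, hae₁, hae₂] with x h1 h2 h3
        rw [h1]
        simp only [Pi.add_apply, h2, h3]
        rfl
      zero_mem' := by
        refine ⟨∅, fun _ => 0, measurable_const, ?_⟩
        filter_upwards [Lp.coeFn_zero ℂ 2 μ] with x h1
        simp [h1]
      smul_mem' := by
        rintro c G ⟨s, ψ, hψ, hae⟩
        refine ⟨s, fun y => c * ψ y, measurable_const.mul hψ, ?_⟩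
        filter_upwards [Lp.coeFn_smul c G, hae] with x h1 h2
        rw [h1]
        simp [h2] }
  have hWdense : ∀ G : Lp ℂ 2 μ, G ∈ W.topologicalClosure := by
    intro G
    refine Lp.induction (by simp : (2:ℝ≥0∞) ≠ ∞)
      (fun G => G ∈ W.topologicalClosure) ?_ ?_ ?_ G
    · intro c u hu hμu
      have hsub := (bpAlg_measureDense hμ).indicatorConstLp_subset_closure (p := 2) c
      have hmem0 := hsub ⟨u, hu, hμu.ne, rfl⟩
      have hsubset : {g | ∃ (A : Set (H → X₀)) (hA : A ∈ bpAlg H X₀) (hμA : μ A ≠ ⊤),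
          indicatorConstLp 2 ((bpAlg_measureDense hμ).measurable A hA) hμA c = g}
          ⊆ (W : Set (Lp ℂ 2 μ)) := by
        rintro g ⟨A, hA, hμA, rfl⟩
        obtain ⟨s, B, hB, rfl⟩ := hA
        refine ⟨s, fun y => Set.indicator B (fun _ => c) y,
          measurable_const.indicator hB, ?_⟩
        filter_upwards [indicatorConstLp_coeFn
          (p := 2) (hs := (bpAlg_measureDense hμ).measurable _ ⟨s, B, hB, rfl⟩)
          (hμs := hμA) (c := c)] with x h1
        rw [h1]
        by_cases hx : bpRestr s x ∈ B
        · rw [Set.indicator_of_mem hx, Set.indicator_of_mem (by exact hx)]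
        · rw [Set.indicator_of_notMem hx, Set.indicator_of_notMem (by exact hx)]
      rw [Lp.simpleFunc.coe_indicatorConst]
      show _ ∈ (W.topologicalClosure : Set (Lp ℂ 2 μ))
      rw [Submodule.topologicalClosure_coe]
      exact closure_mono hsubset hmem0
    · intro f' g' hf' hg' hd h1 h2
      exact Submodule.add_mem _ h1 h2
    · exact W.isClosed_topologicalClosure
  -- choose ε and an approximating cylinder function G
  have hRnn : (0:ℝ) ≤ R := norm_nonneg F
  set ε : ℝ := min 1 (V / (2 * (4 * R + 2))) with hεdef
  have hε_pos : 0 < ε := by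
    apply lt_min one_pos
    apply div_pos hV_pos
    nlinarith
  obtain ⟨G, hGW, hGdist⟩ : ∃ G' ∈ (W : Set (Lp ℂ 2 μ)), dist F G' < ε := by
    have hFcl : F ∈ closure (W : Set (Lp ℂ 2 μ)) := by
      rw [← Submodule.topologicalClosure_coe]
      exact hWdense F
    exact Metric.mem_closure_iff.mp hFcl ε hε_pos
  obtain ⟨s, ψ, hψ, hGae⟩ := hGW
  set a : ℝ := ‖F - G‖ with hadef
  have ha : a < ε := by rwa [dist_eq_norm] at hGdist
  have hann : 0 ≤ a := norm_nonneg _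
  have ha1 : a ≤ 1 := le_trans ha.le (min_le_left _ _)
  have haV : a * (2 * (4 * R + 2)) ≤ V := by
    have h1 : a ≤ V / (2 * (4 * R + 2)) := le_trans ha.le (min_le_right _ _)
    have h2 : (0:ℝ) < 2 * (4 * R + 2) := by nlinarith
    calc a * (2 * (4 * R + 2)) ≤ (V / (2 * (4 * R + 2))) * (2 * (4 * R + 2)) := by
          exact mul_le_mul_of_nonneg_right h1 h2.le
      _ = V := div_mul_cancel₀ V h2.ne'
  set bad : Finset H := Finset.image₂ (fun i j => i * j⁻¹) s s with hbaddef
  have hkey : ∀ h : H, h ∉ bad → Real.sqrt V ≤ ‖F - T h F‖ := by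
    intro h hhbad
    set t : Finset H := s.image (fun i => h⁻¹ * i) with htdef
    have hdisj : Disjoint t s := by
      rw [Finset.disjoint_left]
      rintro j hj hjs
      obtain ⟨i, hi, rfl⟩ := Finset.mem_image.mp hj
      exact hhbad (Finset.mem_image₂.mpr ⟨i, hi, h⁻¹ * i, hjs, by group⟩)
    set w : (H → X₀) → ℂ := fun x => ψ (bpRestr s x) with hwdef
    have hw_meas : Measurable w := hψ.comp (bp_measurable_restr s)
    have hχ_meas : Measurable (fun (y : (j : t) → X₀) (i : s) =>
        y ⟨h⁻¹ * i.1, Finset.mem_image_of_mem _ i.2⟩) :=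
      measurable_pi_lambda _ fun _ => measurable_pi_apply _
    have hIndep : ProbabilityTheory.IndepFun (fun x => w (bernoulliShift h x)) w μ := by
      have : (fun x => w (bernoulliShift h x))
          = (fun y : (j : t) → X₀ => ψ (fun i : s => y ⟨h⁻¹ * i.1,
              Finset.mem_image_of_mem _ i.2⟩)) ∘ (bpRestr t) := rfl
      rw [this, hwdef]
      exact (hμ.indepFun_restr hdisj).comp (hψ.comp hχ_meas) hψ
    have hTGae : (T h G : (H → X₀) → ℂ) =ᵐ[μ] fun x => w (bernoulliShift h x) :=
      hTae h G w hGae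
    have hw_int : Integrable w μ := (hint G).congr hGae
    have hu_int : Integrable (fun x => w (bernoulliShift h x)) μ := (hint (T h G)).congr hTGae
    have hconj_int : Integrable (fun x => (starRingEnd ℂ) (w x)) μ := by
      refine ⟨RCLike.continuous_conj.comp_aestronglyMeasurable hw_int.1, ?_⟩
      have hnn : (fun x => (‖(starRingEnd ℂ) (w x)‖₊ : ℝ≥0∞)) = fun x => (‖w x‖₊ : ℝ≥0∞) := by
        funext x
        simp [RCLike.nnnorm_conj]
      simpa [MeasureTheory.HasFiniteIntegral, hnn] using hw_int.2
    have hIwint : ∫ x, w (bernoulliShift h x) ∂μ = ∫ x, w x ∂μ := by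
      calc ∫ x, w (bernoulliShift h x) ∂μ = ∫ y, w y ∂(μ.map (bernoulliShift h)) :=
          (integral_map (bp_measurable_shift h).aemeasurable
            hw_meas.aestronglyMeasurable).symm
        _ = ∫ x, w x ∂μ := by rw [(hμ.measurePreserving h).map_eq]
    set mG : ℂ := ∫ x, w x ∂μ with hmGdef
    have hGinner : ⟪G, T h G⟫ = (starRingEnd ℂ) mG * mG := by
      rw [MeasureTheory.L2.inner_def]
      have hcongr : ∫ x', ⟪(G : (H → X₀) → ℂ) x', (T h G : (H → X₀) → ℂ) x'⟫ ∂μ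
          = ∫ x, (starRingEnd ℂ) (w x) * w (bernoulliShift h x) ∂μ := by
        refine integral_congr_ae ?_
        filter_upwards [hGae, hTGae] with x h1 h2
        rw [RCLike.inner_apply, h1, h2, mul_comm]
      have hIF : ProbabilityTheory.IndepFun (fun x => (starRingEnd ℂ) (w x))
          (fun x => w (bernoulliShift h x)) μ := by
        have := hIndep.symm.comp (φ := starRingEnd ℂ) (ψ := id)
          (RCLike.continuous_conj.measurable) measurable_id
        exact this
      rw [hcongr, bp_indepFun_integral_mul hIF hconj_int hu_int, integral_conj, hIwint]
    have hreGG : RCLike.re ⟪G, T h G⟫ = ‖mG‖ ^ 2 := by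
      rw [hGinner, mul_comm, Complex.mul_conj]
      simp [Complex.normSq_eq_norm_sq, ← Complex.ofReal_pow]
    have hmG_eq : mG = ⟪one, G⟫ := by
      rw [hinner_one G, hmGdef]
      exact (integral_congr_ae hGae).symm
    have hmG_close : ‖mG‖ ≤ ‖m‖ + a := by
      have h2 : m - mG = ⟪one, F - G⟫ := by rw [hmdef, hmG_eq, inner_sub_right]
      have h3 : ‖m - mG‖ ≤ a := by
        rw [h2]
        calc ‖⟪one, F - G⟫‖ ≤ ‖one‖ * ‖F - G‖ := norm_inner_le_norm _ _
          _ = a := by rw [hone_norm, one_mul]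
      calc ‖mG‖ = ‖m - (m - mG)‖ := by rw [sub_sub_cancel]
        _ ≤ ‖m‖ + ‖m - mG‖ := norm_sub_le _ _
        _ ≤ ‖m‖ + a := by linarith
    have hGnorm : ‖G‖ ≤ R + a := by
      calc ‖G‖ = ‖F - (F - G)‖ := by rw [sub_sub_cancel]
        _ ≤ ‖F‖ + ‖F - G‖ := norm_sub_le _ _
    have hFT2 : V ≤ ‖F - T h F‖ ^ 2 := by
      have hexp : ‖F - T h F‖ ^ 2 = R ^ 2 - 2 * RCLike.re ⟪F, T h F⟫ + R ^ 2 := by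
        have := @norm_sub_sq ℂ _ _ _ _ F (T h F)
        rwa [hTnorm h F] at this
      have hT : T h F = T h (F - G) + T h G := by
        rw [map_sub, sub_add_cancel]
      have hsplit : ⟪F, T h F⟫ = ⟪F - G, T h F⟫ + ⟪G, T h (F - G)⟫ + ⟪G, T h G⟫ := by
        calc ⟪F, T h F⟫ = ⟪F - G + G, T h F⟫ := by rw [sub_add_cancel]
          _ = ⟪F - G, T h F⟫ + ⟪G, T h F⟫ := inner_add_left _ _ _
          _ = ⟪F - G, T h F⟫ + (⟪G, T h (F - G)⟫ + ⟪G, T h G⟫) := by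
              nth_rewrite 2 [hT]
              rw [inner_add_right]
          _ = _ := by ring
      have hb1 : |RCLike.re ⟪F - G, T h F⟫| ≤ a * R := by
        calc |RCLike.re ⟪F - G, T h F⟫| ≤ ‖⟪F - G, T h F⟫‖ := RCLike.abs_re_le_norm _
          _ ≤ ‖F - G‖ * ‖T h F‖ := norm_inner_le_norm _ _
          _ = a * R := by rw [hTnorm]
      have hb2 : |RCLike.re ⟪G, T h (F - G)⟫| ≤ (R + a) * a := by
        calc |RCLike.re ⟪G, T h (F - G)⟫| ≤ ‖⟪G, T h (F - G)⟫‖ := RCLike.abs_re_le_norm _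
          _ ≤ ‖G‖ * ‖T h (F - G)‖ := norm_inner_le_norm _ _
          _ = ‖G‖ * a := by rw [hTnorm]
          _ ≤ (R + a) * a := mul_le_mul_of_nonneg_right hGnorm hann
      have hresplit : RCLike.re ⟪F, T h F⟫ = RCLike.re ⟪F - G, T h F⟫
          + RCLike.re ⟪G, T h (F - G)⟫ + ‖mG‖ ^ 2 := by
        rw [hsplit, map_add, map_add, hreGG]
      rw [hexp, hresplit]
      have habs1 := abs_le.mp hb1
      have habs2 := abs_le.mp hb2
      have hmGnn : (0:ℝ) ≤ ‖mG‖ := norm_nonneg _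
      have hmnn : (0:ℝ) ≤ ‖m‖ := norm_nonneg _
      have hVval : V = R ^ 2 - ‖m‖ ^ 2 := hVid
      have hsq : ‖mG‖ ^ 2 ≤ (‖m‖ + a) ^ 2 := by nlinarith
      set r1 := RCLike.re ⟪F - G, T h F⟫ with hr1def
      set r2 := RCLike.re ⟪G, T h (F - G)⟫ with hr2def
      set n := ‖mG‖ with hndef
      set k := ‖m‖ with hkdef
      clear_value r1 r2 n k
      clear hr1def hr2def hndef hkdef hresplit hb1 hb2 hmG_close hGinner hreGG hexp
      nlinarith [mul_le_of_le_one_right hann ha1, mul_le_mul_of_nonneg_right hm_le hann,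
        habs1.1, habs1.2, habs2.1, habs2.2]
    have h2 := Real.sqrt_le_sqrt hFT2
    rw [Real.sqrt_sq (norm_nonneg _), Real.sqrt_sq (norm_nonneg _)] at h2
    rw [hVdef, Real.sqrt_sq (norm_nonneg _)]
    exact h2
  have hsqrtV_pos : 0 < Real.sqrt V := Real.sqrt_pos.mpr hV_pos
  constructor
  · refine Set.Finite.subset bad.finite_toSet ?_
    intro h hh
    by_contra hhb
    have h0 := (hmemiff h).mp hh
    have h1 := hkey h (by simpa using hhb)
    rw [h0] at h1
    linarith
  · set B : Finset H := bad.filter (fun h => ¬ ((fun x => f (bernoulliShift h x)) =ᵐ[μ] f))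
      with hBdef
    by_cases hBne : B.Nonempty
    · refine ⟨min (Real.sqrt V) (B.inf' hBne (fun h => ‖F - T h F‖)), ?_, ?_⟩
      · refine lt_min hsqrtV_pos ?_
        rw [Finset.lt_inf'_iff]
        intro h hhB
        have hnot := (Finset.mem_filter.mp hhB).2
        have hne : ‖F - T h F‖ ≠ 0 := fun h0 => hnot ((hmemiff h).mpr h0)
        exact lt_of_le_of_ne (norm_nonneg _) (Ne.symm hne)
      · intro h hh
        rw [hdiff h]
        apply ENNReal.ofReal_le_ofReal
        by_cases hhb : h ∈ bad
        · exact le_trans (min_le_right _ _)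
            (Finset.inf'_le _ (Finset.mem_filter.mpr ⟨hhb, hh⟩))
        · exact le_trans (min_le_left _ _) (hkey h hhb)
    · refine ⟨Real.sqrt V, hsqrtV_pos, ?_⟩
      intro h hh
      rw [hdiff h]
      apply ENNReal.ofReal_le_ofReal
      by_cases hhb : h ∈ bad
      · exact absurd ⟨h, Finset.mem_filter.mpr ⟨hhb, hh⟩⟩ hBne
      · exact hkey h hhb
end

section
/- Assume H is infinite. Let a₁, …, a_m : X → ℂ be bounded measurable functions, none of which is μ-a.e. constant, set F_j = {h ∈ H : a_j ∘ π_h = a_j μ-a.e.}, and assume ⋂_{j=1}^m F_j = {e}. Then there exists C > 0 such that for every square-summable function x : H → ℂ, max_{1≤j≤m} ( Σ_{h∈H} |x(h)|² · ‖a_j − a_j ∘ π_h‖²_{L²(μ)} )^{1/2} ≥ C · ( Σ_{h∈H, h≠e} |x(h)|² )^{1/2}. -/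
open MeasureTheory Filter ComplexConjugate
open scoped ENNReal symmDiff Pointwise
set_option linter.unusedSectionVars false
set_option linter.unusedVariables false
set_option maxHeartbeats 2000000

namespace Stmt6Proof

section Boxes
variable {H X₀ : Type*} [Group H] [MeasurableSpace X₀] {μ₀ : Measure X₀}
  {μ : Measure (H → X₀)}

lemma measurable_bernoulliShift (g : H) : Measurable (bernoulliShift (X₀ := X₀) g) := by
  unfold bernoulliShift
  exact measurable_pi_lambda _ fun h' => measurable_pi_apply _

def boxes (H X₀ : Type*) [MeasurableSpace X₀] : Set (Set (H → X₀)) :=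
  {B | ∃ (s : Finset H) (E : H → Set X₀),
    (∀ h ∈ s, MeasurableSet (E h)) ∧ B = {x | ∀ h ∈ s, x h ∈ E h}}

lemma measurableSet_of_mem_boxes {B : Set (H → X₀)} (hB : B ∈ boxes H X₀) :
    MeasurableSet B := by
  obtain ⟨s, E, hE, rfl⟩ := hB
  have : {x : H → X₀ | ∀ h ∈ s, x h ∈ E h} = ⋂ h ∈ s, (fun x : H → X₀ => x h) ⁻¹' E h := by
    ext x; simp
  rw [this]
  exact MeasurableSet.biInter s.countable_toSet
    fun h hs => (measurable_pi_apply h) (hE h hs)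

lemma isPiSystem_boxes : IsPiSystem (boxes H X₀) := by
  rintro B ⟨s, E, hE, rfl⟩ B' ⟨s', E', hE', rfl⟩ -
  classical
  refine ⟨s ∪ s', fun h => (if h ∈ s then E h else Set.univ) ∩
      (if h ∈ s' then E' h else Set.univ), fun h hh => ?_, ?_⟩
  · refine MeasurableSet.inter ?_ ?_ <;> split <;>
      first | exact hE _ ‹_› | exact hE' _ ‹_› | exact MeasurableSet.univ
  · ext x
    simp only [Set.mem_inter_iff, Set.mem_setOf_eq, Finset.mem_union, Set.mem_ite_univ_right]
    constructor
    · rintro ⟨h1, h2⟩ h hh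
      constructor
      · intro hs; exact h1 h hs
      · intro hs; exact h2 h hs
    · intro h
      exact ⟨fun g hg => (h g (Or.inl hg)).1 hg, fun g hg => (h g (Or.inr hg)).2 hg⟩

lemma generateFrom_boxes :
    (MeasurableSpace.pi : MeasurableSpace (H → X₀)) =
      MeasurableSpace.generateFrom (boxes H X₀) := by
  apply le_antisymm
  · rw [MeasurableSpace.pi]
    refine iSup_le fun h => ?_
    rw [MeasurableSpace.comap_le_iff_le_map]
    intro E hE
    refine MeasurableSpace.measurableSet_generateFrom ?_
    refine ⟨{h}, fun _ => E, fun _ _ => hE, ?_⟩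
    ext x; simp [MeasurableSpace.map]
  · refine MeasurableSpace.generateFrom_le fun B hB => ?_
    obtain ⟨s, E, hE, rfl⟩ := hB
    have : {x : H → X₀ | ∀ h ∈ s, x h ∈ E h} = ⋂ h ∈ s, (fun x : H → X₀ => x h) ⁻¹' E h := by
      ext x; simp
    rw [this]
    exact MeasurableSet.biInter s.countable_toSet
      fun h hs => (measurable_pi_apply h) (hE h hs)


end Boxes

section MP
variable {H X₀ : Type*} [Group H] [MeasurableSpace X₀] {μ₀ : Measure X₀}
  {μ : Measure (H → X₀)}

lemma measurePreserving_bernoulliShift (hμ : IsBernoulliProduct μ₀ μ) (g : H) :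
    MeasurePreserving (bernoulliShift g) μ μ := by
  have hmeas := measurable_bernoulliShift (X₀ := X₀) g
  refine ⟨hmeas, ?_⟩
  have hprob : IsProbabilityMeasure μ := hμ.1
  have : IsProbabilityMeasure (Measure.map (bernoulliShift g) μ) :=
    Measure.isProbabilityMeasure_map hmeas.aemeasurable
  refine ext_of_generate_finite (boxes H X₀) (generateFrom_boxes (H := H) (X₀ := X₀)) isPiSystem_boxes
    (fun B hB => ?_) (by simp)
  rw [Measure.map_apply hmeas (measurableSet_of_mem_boxes hB)]
  obtain ⟨s, E, hE, rfl⟩ := hB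
  classical
  have hpre : bernoulliShift g ⁻¹' {x : H → X₀ | ∀ h ∈ s, x h ∈ E h}
      = {x : H → X₀ | ∀ h' ∈ s.image (fun h => g⁻¹ * h), x h' ∈ E (g * h')} := by
    ext x
    simp only [Set.mem_preimage, Set.mem_setOf_eq, bernoulliShift, Finset.mem_image]
    constructor
    · rintro hx h' ⟨h, hs, rfl⟩
      have : g * (g⁻¹ * h) = h := by group
      rw [this]
      exact hx h hs
    · intro hx h hs
      have := hx (g⁻¹ * h) ⟨h, hs, rfl⟩
      have h2 : g * (g⁻¹ * h) = h := by group
      rwa [h2] at this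
  rw [hpre, hμ.2 _ _ (by
      intro h' hh'
      simp only [Finset.mem_image] at hh'
      obtain ⟨h, hs, rfl⟩ := hh'
      have : g * (g⁻¹ * h) = h := by group
      rw [this]; exact hE h hs),
    hμ.2 _ _ hE]
  rw [Finset.prod_image (by intro a _ b _ h; exact mul_left_cancel h)]
  apply Finset.prod_congr rfl
  intro h hs
  have : g * (g⁻¹ * h) = h := by group
  rw [this]

lemma iIndepFun_coords (hμ : IsBernoulliProduct μ₀ μ) :
    ProbabilityTheory.iIndepFun
      (fun (h : H) (x : H → X₀) => x h) μ := by
  have hprob : IsProbabilityMeasure μ := hμ.1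
  rw [ProbabilityTheory.iIndepFun_iff_measure_inter_preimage_eq_mul]
  intro S sets hsets
  have h1 : (⋂ i ∈ S, (fun x : H → X₀ => x i) ⁻¹' sets i)
      = {x : H → X₀ | ∀ h ∈ S, x h ∈ sets h} := by ext x; simp
  have h2 : ∀ i ∈ S, μ ((fun x : H → X₀ => x i) ⁻¹' sets i) = μ₀ (sets i) := by
    intro i hi
    have := hμ.2 {i} sets (by simpa using hsets i hi)
    simp at this; exact this
  rw [h1, hμ.2 S sets hsets]
  exact (Finset.prod_congr rfl h2).symm


def restr (T : Finset H) (x : H → X₀) : ∀ _ : T, X₀ := fun i => x i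

lemma measurable_restr (T : Finset H) : Measurable (restr (X₀ := X₀) T) :=
  measurable_pi_lambda _ fun i => measurable_pi_apply _

def cylSet (T : Finset H) (S : Set (∀ _ : T, X₀)) : Set (H → X₀) := restr T ⁻¹' S

lemma measurableSet_cylSet {T : Finset H} {S : Set (∀ _ : T, X₀)} (hS : MeasurableSet S) :
    MeasurableSet (cylSet T S) := measurable_restr T hS

/-- liftings of cylinder sets to bigger coordinate sets -/
def liftCyl {T T' : Finset H} (hTT : T ⊆ T') (S : Set (∀ _ : T, X₀)) : Set (∀ _ : T', X₀) :=
  (fun (y : ∀ _ : T', X₀) (i : T) => y ⟨i, hTT i.2⟩) ⁻¹' S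

lemma measurableSet_liftCyl {T T' : Finset H} (hTT : T ⊆ T') {S : Set (∀ _ : T, X₀)}
    (hS : MeasurableSet S) : MeasurableSet (liftCyl hTT S) :=
  (measurable_pi_lambda _ fun i => measurable_pi_apply _) hS

lemma cylSet_liftCyl {T T' : Finset H} (hTT : T ⊆ T') (S : Set (∀ _ : T, X₀)) :
    cylSet T' (liftCyl hTT S) = cylSet T S := rfl

def Good (μ : Measure (H → X₀)) (t : Set (H → X₀)) : Prop :=
  ∀ ε : ℝ≥0∞, 0 < ε → ∃ (T : Finset H) (S : Set (∀ _ : T, X₀)),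
    MeasurableSet S ∧ μ (symmDiff t (cylSet T S)) ≤ ε

lemma Good.compl {t : Set (H → X₀)} (ht : Good μ t) : Good μ tᶜ := by
  intro ε hε
  obtain ⟨T, S, hS, h⟩ := ht ε hε
  refine ⟨T, Sᶜ, hS.compl, ?_⟩
  have : cylSet T Sᶜ = (cylSet T S)ᶜ := rfl
  rw [this, compl_symmDiff_compl]
  exact h

lemma Good.union {t t' : Set (H → X₀)} (ht : Good μ t) (ht' : Good μ t') :
    Good μ (t ∪ t') := by
  intro ε hε
  obtain ⟨T, S, hS, h⟩ := ht (ε / 2) (ENNReal.div_pos hε.ne' (by norm_num))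
  obtain ⟨T', S', hS', h'⟩ := ht' (ε / 2) (ENNReal.div_pos hε.ne' (by norm_num))
  classical
  refine ⟨T ∪ T', liftCyl Finset.subset_union_left S ∪ liftCyl Finset.subset_union_right S',
    (measurableSet_liftCyl _ hS).union (measurableSet_liftCyl _ hS'), ?_⟩
  have hcyl : cylSet (T ∪ T')
      (liftCyl Finset.subset_union_left S ∪ liftCyl Finset.subset_union_right S')
      = cylSet T S ∪ cylSet T' S' := rfl
  rw [hcyl]
  have hsub : symmDiff (t ∪ t') (cylSet T S ∪ cylSet T' S') ⊆
      symmDiff t (cylSet T S) ∪ symmDiff t' (cylSet T' S') := by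
    intro x hx
    simp only [Set.mem_union, Set.mem_symmDiff] at hx ⊢
    tauto
  calc μ _ ≤ μ (symmDiff t (cylSet T S) ∪ symmDiff t' (cylSet T' S')) := measure_mono hsub
    _ ≤ μ (symmDiff t (cylSet T S)) + μ (symmDiff t' (cylSet T' S')) := measure_union_le _ _
    _ ≤ ε / 2 + ε / 2 := add_le_add h h'
    _ = ε := ENNReal.add_halves ε

lemma Good.empty : Good μ (∅ : Set (H → X₀)) := by
  intro ε hε
  refine ⟨∅, ∅, MeasurableSet.empty, ?_⟩
  have : cylSet (∅ : Finset H) (∅ : Set (∀ _ : (∅ : Finset H), X₀)) = ∅ := by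
    simp [cylSet]
  rw [this]
  simp

lemma good_of_measurable [IsProbabilityMeasure μ] {t : Set (H → X₀)}
    (ht : MeasurableSet t) : Good μ t := by
  have ht' : MeasurableSet[MeasurableSpace.generateFrom (boxes H X₀)] t := by
    rw [← generateFrom_boxes]; exact ht
  induction t, ht' using MeasurableSpace.generateFrom_induction with
  | hC t htC _ =>
    intro ε hε
    classical
    obtain ⟨s, E, hE, rfl⟩ := htC
    refine ⟨s, {y : ∀ _ : s, X₀ | ∀ i : s, y i ∈ E i}, ?_, ?_⟩
    · have : {y : ∀ _ : s, X₀ | ∀ i : s, y i ∈ E i} = Set.pi Set.univ (fun i : s => E i) := by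
        ext y; simp [Set.mem_pi]
      rw [this]
      exact MeasurableSet.univ_pi fun i => hE i i.2
    · have : cylSet s {y : ∀ _ : s, X₀ | ∀ i : s, y i ∈ E i}
          = {x : H → X₀ | ∀ h ∈ s, x h ∈ E h} := by
        ext x
        simp only [cylSet, Set.mem_preimage, Set.mem_setOf_eq, restr]
        exact ⟨fun h g hg => h ⟨g, hg⟩, fun h i => h i i.2⟩
      rw [this, symmDiff_self]
      simp
  | empty => exact Good.empty
  | compl t htm iht =>
    exact (iht (by rw [generateFrom_boxes (H := H) (X₀ := X₀)]; exact htm)).compl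
  | iUnion f hfm ihf =>
    -- countable unions
    intro ε hε
    have hε2 : 0 < ε / 2 := ENNReal.div_pos hε.ne' (by norm_num)
    -- partial unions
    set A : ℕ → Set (H → X₀) := fun N => ⋃ n ∈ Finset.range N, f n with hA
    have hAmeas : ∀ N, MeasurableSet (A N) := by
      intro N
      refine MeasurableSet.biUnion (Finset.range N).countable_toSet fun n _ => ?_
      rw [generateFrom_boxes]; exact hfm n
    have hAgood : ∀ N, Good μ (A N) := by
      intro N
      induction N with
      | zero => simpa [hA] using (Good.empty : Good μ (∅ : Set (H → X₀)))
      | succ N ihN =>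
        have : A (N + 1) = A N ∪ f N := by
          simp only [hA, Finset.range_add_one]
          ext x; simp [or_comm]
        rw [this]
        exact ihN.union (ihf N (by rw [generateFrom_boxes (H := H) (X₀ := X₀)]; exact hfm N))
    have hanti : Antitone fun N => (⋃ n, f n) \ A N := by
      intro i j hij
      apply Set.diff_subset_diff_right
      intro x hx
      simp only [hA, Set.mem_iUnion] at hx ⊢
      obtain ⟨n, hn, hx⟩ := hx
      exact ⟨n, by simp only [Finset.mem_range] at hn ⊢; omega, hx⟩
    have hinter : ⋂ N, ((⋃ n, f n) \ A N) = ∅ := by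
      apply Set.eq_empty_iff_forall_notMem.2
      intro x hx
      simp only [Set.mem_iInter, Set.mem_diff] at hx
      obtain ⟨n, hn⟩ := Set.mem_iUnion.1 (hx 0).1
      exact (hx (n + 1)).2 (by
        simp only [hA, Set.mem_iUnion]
        exact ⟨n, by simp, hn⟩)
    have htend : Tendsto (fun N => μ ((⋃ n, f n) \ A N)) atTop (nhds 0) := by
      have h1 : ∀ N, MeasurableSet ((⋃ n, f n) \ A N) := by
        intro N
        refine MeasurableSet.diff ?_ (hAmeas N)
        refine MeasurableSet.iUnion fun n => ?_
        rw [generateFrom_boxes]; exact hfm n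
      have := tendsto_measure_iInter_atTop (μ := μ) (fun N => (h1 N).nullMeasurableSet) hanti
        ⟨0, (measure_lt_top μ _).ne⟩
      rwa [hinter, measure_empty] at this
    obtain ⟨N, hN⟩ := (htend.eventually_lt_const hε2).exists
    obtain ⟨T, S, hS, hTS⟩ := hAgood N (ε / 2) hε2
    refine ⟨T, S, hS, ?_⟩
    have hsub : symmDiff (⋃ n, f n) (cylSet T S) ⊆
        ((⋃ n, f n) \ A N) ∪ symmDiff (A N) (cylSet T S) := by
      intro x hx
      have hAsub : A N ⊆ ⋃ n, f n := by
        intro y hy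
        simp only [hA, Set.mem_iUnion] at hy ⊢
        obtain ⟨n, _, h⟩ := hy
        exact ⟨n, h⟩
      simp only [Set.mem_union, Set.mem_symmDiff, Set.mem_diff] at hx ⊢
      tauto
    calc μ _ ≤ μ (((⋃ n, f n) \ A N) ∪ symmDiff (A N) (cylSet T S)) := measure_mono hsub
      _ ≤ μ ((⋃ n, f n) \ A N) + μ (symmDiff (A N) (cylSet T S)) := measure_union_le _ _
      _ ≤ ε / 2 + ε / 2 := add_le_add hN.le hTS
      _ = ε := ENNReal.add_halves ε


/-- bounded measurable cylinder functions -/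
def IsCylFun (b : (H → X₀) → ℂ) : Prop :=
  ∃ (T : Finset H) (φ : (∀ _ : T, X₀) → ℂ), Measurable φ ∧ (∃ M, ∀ y, ‖φ y‖ ≤ M) ∧
    b = fun x => φ (restr T x)

lemma IsCylFun.measurable {b : (H → X₀) → ℂ} (hb : IsCylFun b) : Measurable b := by
  obtain ⟨T, φ, hφ, -, rfl⟩ := hb
  exact hφ.comp (measurable_restr T)

lemma IsCylFun.zero : IsCylFun (0 : (H → X₀) → ℂ) :=
  ⟨∅, 0, measurable_const, ⟨0, fun _ => by simp⟩, rfl⟩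

lemma IsCylFun.add {b b' : (H → X₀) → ℂ} (hb : IsCylFun b) (hb' : IsCylFun b') :
    IsCylFun (b + b') := by
  obtain ⟨T, φ, hφ, ⟨M, hM⟩, rfl⟩ := hb
  obtain ⟨T', φ', hφ', ⟨M', hM'⟩, rfl⟩ := hb'
  classical
  refine ⟨T ∪ T',
    (fun y => φ (fun i : T => y ⟨i, Finset.subset_union_left i.2⟩) +
      φ' (fun i : T' => y ⟨i, Finset.subset_union_right i.2⟩)), ?_, ⟨M + M', fun y => ?_⟩, rfl⟩
  · exact (hφ.comp (measurable_pi_lambda _ fun i => measurable_pi_apply _)).add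
      (hφ'.comp (measurable_pi_lambda _ fun i => measurable_pi_apply _))
  · exact (norm_add_le _ _).trans (add_le_add (hM _) (hM' _))

lemma IsCylFun.indicator_cylSet {T : Finset H} {S : Set (∀ _ : T, X₀)} (hS : MeasurableSet S)
    (c : ℂ) : IsCylFun ((cylSet T S).indicator fun _ => c) := by
  refine ⟨T, S.indicator fun _ => c, measurable_const.indicator hS, ⟨‖c‖, fun y => ?_⟩, ?_⟩
  · exact norm_indicator_le_norm_self _ _
  · ext x
    simp only [cylSet, Set.indicator, Set.mem_preimage]
    rfl

lemma exists_cylfun_approx_simple [IsProbabilityMeasure μ] (g : SimpleFunc (H → X₀) ℂ) :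
    ∀ ε : ℝ≥0∞, 0 < ε → ∃ b, IsCylFun b ∧ eLpNorm (⇑g - b) 2 μ ≤ ε := by
  induction g using SimpleFunc.induction with
  | const c hs =>
    rename_i s
    intro ε hε
    rcases eq_or_ne ε ⊤ with rfl | hεtop
    · exact ⟨0, IsCylFun.zero, le_top⟩
    rcases eq_or_ne c 0 with rfl | hc
    · refine ⟨0, IsCylFun.zero, ?_⟩
      have : (⇑(SimpleFunc.piecewise s hs (SimpleFunc.const _ (0:ℂ)) (SimpleFunc.const _ 0))
          - (0 : (H → X₀) → ℂ)) = 0 := by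
        ext x
        simp [SimpleFunc.piecewise_apply]
      rw [this, eLpNorm_zero]
      exact zero_le
    -- c ≠ 0
    have hc' : (‖c‖₊ : ℝ≥0∞) ≠ 0 := by simpa using hc
    have hδpos : 0 < (ε / ‖c‖₊) ^ (2 : ℝ) := by
      apply ENNReal.rpow_pos
      · exact ENNReal.div_pos hε.ne' ENNReal.coe_ne_top
      · exact (ENNReal.div_lt_top hεtop hc').ne
    obtain ⟨T, S, hS, hTS⟩ := good_of_measurable (μ := μ) hs _ hδpos
    refine ⟨(cylSet T S).indicator fun _ => c, IsCylFun.indicator_cylSet hS c, ?_⟩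
    have hdiff : ∀ x : H → X₀,
        ‖(⇑(SimpleFunc.piecewise s hs (SimpleFunc.const _ c) (SimpleFunc.const _ 0)) -
          (cylSet T S).indicator fun _ => c) x‖ =
        ‖(symmDiff s (cylSet T S)).indicator (fun _ => c) x‖ := by
      intro x
      by_cases hx1 : x ∈ s <;> by_cases hx2 : x ∈ cylSet T S <;>
        simp [SimpleFunc.piecewise_apply, Set.indicator, Set.mem_symmDiff, hx1, hx2]
    rw [eLpNorm_congr_norm_ae (ae_of_all _ hdiff),
      eLpNorm_indicator_const (hs.symmDiff (measurableSet_cylSet hS)) (by norm_num) (by norm_num)]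
    have h2 : (2 : ℝ≥0∞).toReal = 2 := by norm_num
    rw [h2]
    calc (‖c‖₊ : ℝ≥0∞) * μ (symmDiff s (cylSet T S)) ^ (1 / 2 : ℝ)
        ≤ (‖c‖₊ : ℝ≥0∞) * ((ε / ‖c‖₊) ^ (2:ℝ)) ^ (1 / 2 : ℝ) := by
          exact mul_le_mul_right (ENNReal.rpow_le_rpow hTS (by norm_num)) _
      _ = (‖c‖₊ : ℝ≥0∞) * (ε / ‖c‖₊) := by
          rw [← ENNReal.rpow_mul]
          norm_num
      _ ≤ ε := ENNReal.mul_div_le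
  | add hdisj ihf ihg =>
    rename_i f g
    intro ε hε
    have hε2 : 0 < ε / 2 := ENNReal.div_pos hε.ne' (by norm_num)
    obtain ⟨b, hb, hbe⟩ := ihf _ hε2
    obtain ⟨b', hb', hbe'⟩ := ihg _ hε2
    refine ⟨b + b', hb.add hb', ?_⟩
    have : (⇑(f + g) - (b + b')) = (⇑f - b) + (⇑g - b') := by
      ext x; simp [SimpleFunc.coe_add]; ring
    rw [this]
    calc eLpNorm ((⇑f - b) + (⇑g - b')) 2 μ
        ≤ eLpNorm (⇑f - b) 2 μ + eLpNorm (⇑g - b') 2 μ :=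
          eLpNorm_add_le ((f.measurable.sub hb.measurable).aestronglyMeasurable)
            ((g.measurable.sub hb'.measurable).aestronglyMeasurable) (by norm_num)
      _ ≤ ε / 2 + ε / 2 := add_le_add hbe hbe'
      _ = ε := ENNReal.add_halves ε

lemma exists_cylfun_approx [IsProbabilityMeasure μ] {f : (H → X₀) → ℂ}
    (hf : MemLp f 2 μ) {ε : ℝ≥0∞} (hε : 0 < ε) :
    ∃ b, IsCylFun b ∧ eLpNorm (f - b) 2 μ ≤ ε := by
  have hε2 : 0 < ε / 2 := ENNReal.div_pos hε.ne' (by norm_num)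
  obtain ⟨g, hg, hgmem⟩ := hf.exists_simpleFunc_eLpNorm_sub_lt (by norm_num) hε2.ne'
  obtain ⟨b, hb, hbe⟩ := exists_cylfun_approx_simple (μ := μ) g _ hε2
  refine ⟨b, hb, ?_⟩
  have : f - b = (f - ⇑g) + (⇑g - b) := by ext x; simp
  rw [this]
  calc eLpNorm ((f - ⇑g) + (⇑g - b)) 2 μ
      ≤ eLpNorm (f - ⇑g) 2 μ + eLpNorm (⇑g - b) 2 μ :=
        eLpNorm_add_le (hf.aestronglyMeasurable.sub g.measurable.aestronglyMeasurable)
          ((g.measurable.sub hb.measurable).aestronglyMeasurable) (by norm_num)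
    _ ≤ ε / 2 + ε / 2 := add_le_add hg.le hbe
    _ = ε := ENNReal.add_halves ε


end MP

section Helpers
variable {Ω : Type*} [MeasurableSpace Ω] {μ : Measure Ω} [IsProbabilityMeasure μ]

lemma memℒp_two_of_bound {E : Type*} [NormedAddCommGroup E] {f : Ω → E}
    (hm : AEStronglyMeasurable f μ) (M : ℝ) (hb : ∀ x, ‖f x‖ ≤ M) : MemLp f 2 μ :=
  (memLp_top_of_bound hm M (Eventually.of_forall hb)).mono_exponent le_top

lemma integrable_of_bound {E : Type*} [NormedAddCommGroup E] {f : Ω → E}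
    (hm : AEStronglyMeasurable f μ) (M : ℝ) (hb : ∀ x, ‖f x‖ ≤ M) : Integrable f μ :=
  (memLp_top_of_bound hm M (Eventually.of_forall hb)).integrable le_top

lemma sq_toReal_eLpNorm {f : Ω → ℂ} (hf : MemLp f 2 μ) :
    ((eLpNorm f 2 μ).toReal) ^ 2 = ∫ x, ‖f x‖ ^ 2 ∂μ := by
  rw [hf.eLpNorm_eq_integral_rpow_norm (by norm_num) (by norm_num)]
  have h2 : (2 : ℝ≥0∞).toReal = 2 := by norm_num
  rw [h2]
  have hint : ∀ x, ‖f x‖ ^ (2 : ℝ) = ‖f x‖ ^ (2 : ℕ) := fun x => by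
    rw [← Real.rpow_natCast]; norm_num
  have hnn : 0 ≤ ∫ x, ‖f x‖ ^ (2 : ℝ) ∂μ :=
    integral_nonneg fun x => Real.rpow_nonneg (norm_nonneg _) _
  rw [ENNReal.toReal_ofReal (Real.rpow_nonneg hnn _)]
  rw [← Real.rpow_natCast (_ ^ (2:ℝ)⁻¹) 2, ← Real.rpow_mul hnn]
  rw [integral_congr_ae (Eventually.of_forall fun x => (hint x))]
  norm_num

lemma norm_sub_sq_complex (z w : ℂ) :
    ‖z - w‖ ^ 2 = ‖z‖ ^ 2 + ‖w‖ ^ 2 - 2 * (z * conj w).re := by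
  have h : ∀ u : ℂ, ‖u‖ ^ 2 = u.re ^ 2 + u.im ^ 2 := by
    intro u
    rw [Complex.sq_norm, Complex.normSq_apply]; ring
  simp only [h, Complex.sub_re, Complex.sub_im, Complex.mul_re, Complex.conj_re,
    Complex.conj_im]
  ring

/-- integral of a product of bounded independent complex functions -/
lemma indep_integral_mul {f g : Ω → ℂ} (hindep : ProbabilityTheory.IndepFun f g μ)
    (hfm : Measurable f) (hgm : Measurable g) (Mf Mg : ℝ)
    (hfb : ∀ x, ‖f x‖ ≤ Mf) (hgb : ∀ x, ‖g x‖ ≤ Mg) :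
    ∫ x, f x * g x ∂μ = (∫ x, f x ∂μ) * ∫ x, g x ∂μ := by
  have hre : ∀ (u : Ω → ℂ) (M : ℝ), Measurable u → (∀ x, ‖u x‖ ≤ M) →
      Integrable (fun x => (u x).re) μ ∧ Integrable (fun x => (u x).im) μ := by
    intro u M hu hb
    constructor
    · exact integrable_of_bound (Complex.measurable_re.comp hu).aestronglyMeasurable M
        fun x => (Complex.abs_re_le_norm _).trans (hb x)
    · exact integrable_of_bound (Complex.measurable_im.comp hu).aestronglyMeasurable M
        fun x => (Complex.abs_im_le_norm _).trans (hb x)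
  obtain ⟨hfre, hfim⟩ := hre f Mf hfm hfb
  obtain ⟨hgre, hgim⟩ := hre g Mg hgm hgb
  have hind : ∀ (φ ψ : ℂ → ℝ), Measurable φ → Measurable ψ →
      ProbabilityTheory.IndepFun (fun x => φ (f x)) (fun x => ψ (g x)) μ :=
    fun φ ψ hφ hψ => hindep.comp hφ hψ
  have hmul : ∀ (φ ψ : ℂ → ℝ) (hφ : Measurable φ) (hψ : Measurable ψ),
      (∫ x, φ (f x) * ψ (g x) ∂μ) = (∫ x, φ (f x) ∂μ) * ∫ x, ψ (g x) ∂μ := by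
    intro φ ψ hφ hψ
    exact (hind φ ψ hφ hψ).integral_fun_mul_eq_mul_integral ((hφ.comp hfm).aestronglyMeasurable)
      ((hψ.comp hgm).aestronglyMeasurable)
  have hfint : Integrable f μ := integrable_of_bound hfm.aestronglyMeasurable Mf hfb
  have hgint : Integrable g μ := integrable_of_bound hgm.aestronglyMeasurable Mg hgb
  have hfgint : Integrable (fun x => f x * g x) μ :=
    integrable_of_bound (hfm.mul hgm).aestronglyMeasurable (‖Mf‖ * ‖Mg‖) fun x => by
      rw [norm_mul]
      exact mul_le_mul ((hfb x).trans (le_abs_self _)) ((hgb x).trans (le_abs_self _))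
        (norm_nonneg _) (abs_nonneg _)
  have hint_re : ∀ {u : Ω → ℂ}, Integrable u μ → (∫ x, u x ∂μ).re = ∫ x, (u x).re ∂μ := by
    intro u hu
    have := integral_re hu
    simpa [RCLike.re_to_complex] using this.symm
  have hint_im : ∀ {u : Ω → ℂ}, Integrable u μ → (∫ x, u x ∂μ).im = ∫ x, (u x).im ∂μ := by
    intro u hu
    have := integral_im hu
    simpa [RCLike.im_to_complex] using this.symm
  have hprod : ∀ (φ ψ : ℂ → ℝ), Measurable φ → Measurable ψ →
      (∀ z, |φ z| ≤ ‖z‖) → (∀ z, |ψ z| ≤ ‖z‖) →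
      Integrable (fun x => φ (f x) * ψ (g x)) μ := by
    intro φ ψ hφ hψ hφb hψb
    refine integrable_of_bound ((hφ.comp hfm).mul (hψ.comp hgm)).aestronglyMeasurable
      (Mf * Mg) fun x => ?_
    have h0f : (0:ℝ) ≤ ‖f x‖ := norm_nonneg _
    have h0g : (0:ℝ) ≤ ‖g x‖ := norm_nonneg _
    calc ‖φ (f x) * ψ (g x)‖ = |φ (f x)| * |ψ (g x)| := by
          rw [norm_mul, Real.norm_eq_abs, Real.norm_eq_abs]
      _ ≤ ‖f x‖ * ‖g x‖ := mul_le_mul (hφb _) (hψb _) (abs_nonneg _) h0f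
      _ ≤ Mf * Mg := mul_le_mul (hfb x) (hgb x) h0g (h0f.trans (hfb x))
  apply Complex.ext
  · rw [hint_re hfgint, Complex.mul_re, hint_re hfint, hint_im hfint, hint_re hgint,
      hint_im hgint, ← hmul _ _ Complex.measurable_re Complex.measurable_re,
      ← hmul _ _ Complex.measurable_im Complex.measurable_im,
      ← integral_sub (hprod _ _ Complex.measurable_re Complex.measurable_re
          (fun z => Complex.abs_re_le_norm z) (fun z => Complex.abs_re_le_norm z))
        (hprod _ _ Complex.measurable_im Complex.measurable_im
          (fun z => Complex.abs_im_le_norm z) (fun z => Complex.abs_im_le_norm z))]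
    exact integral_congr_ae (Eventually.of_forall fun x => by simp [Complex.mul_re])
  · rw [hint_im hfgint, Complex.mul_im, hint_re hfint, hint_im hfint, hint_re hgint,
      hint_im hgint, ← hmul _ _ Complex.measurable_re Complex.measurable_im,
      ← hmul _ _ Complex.measurable_im Complex.measurable_re,
      ← integral_add (hprod _ _ Complex.measurable_re Complex.measurable_im
          (fun z => Complex.abs_re_le_norm z) (fun z => Complex.abs_im_le_norm z))
        (hprod _ _ Complex.measurable_im Complex.measurable_re
          (fun z => Complex.abs_im_le_norm z) (fun z => Complex.abs_re_le_norm z))]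
    exact integral_congr_ae (Eventually.of_forall fun x => by simp [Complex.mul_im])

lemma integral_norm_sub_sq {f g : Ω → ℂ} (hfm : Measurable f) (hgm : Measurable g)
    {Mf Mg : ℝ} (hfb : ∀ x, ‖f x‖ ≤ Mf) (hgb : ∀ x, ‖g x‖ ≤ Mg) :
    ∫ x, ‖f x - g x‖ ^ 2 ∂μ = (∫ x, ‖f x‖ ^ 2 ∂μ) + (∫ x, ‖g x‖ ^ 2 ∂μ)
      - 2 * (∫ x, f x * (starRingEnd ℂ) (g x) ∂μ).re := by
  have h0f : ∀ x, (0:ℝ) ≤ ‖f x‖ := fun x => norm_nonneg _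
  have hMf : ∀ x, ‖‖f x‖ ^ 2‖ ≤ Mf ^ 2 := fun x => by
    rw [Real.norm_eq_abs, abs_of_nonneg (by positivity)]
    exact pow_le_pow_left₀ (h0f x) (hfb x) 2
  have hMg : ∀ x, ‖‖g x‖ ^ 2‖ ≤ Mg ^ 2 := fun x => by
    rw [Real.norm_eq_abs, abs_of_nonneg (by positivity)]
    exact pow_le_pow_left₀ (norm_nonneg _) (hgb x) 2
  have hif : Integrable (fun x => ‖f x‖ ^ 2) μ :=
    integrable_of_bound ((hfm.norm.pow_const 2).aestronglyMeasurable) (Mf ^ 2) hMf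
  have hig : Integrable (fun x => ‖g x‖ ^ 2) μ :=
    integrable_of_bound ((hgm.norm.pow_const 2).aestronglyMeasurable) (Mg ^ 2) hMg
  have hconjg : Measurable fun x => (starRingEnd ℂ) (g x) :=
    Complex.continuous_conj.measurable.comp hgm
  have hiprod : Integrable (fun x => f x * (starRingEnd ℂ) (g x)) μ := by
    refine integrable_of_bound (hfm.mul hconjg).aestronglyMeasurable (Mf * Mg) fun x => ?_
    rw [norm_mul, RCLike.norm_conj]
    exact mul_le_mul (hfb x) (hgb x) (norm_nonneg _) ((h0f x).trans (hfb x))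
  have hire : Integrable (fun x => (f x * (starRingEnd ℂ) (g x)).re) μ :=
    hiprod.re
  have hptw : ∀ x, ‖f x - g x‖ ^ 2
      = ‖f x‖ ^ 2 + ‖g x‖ ^ 2 - 2 * (f x * (starRingEnd ℂ) (g x)).re := fun x =>
    norm_sub_sq_complex _ _
  calc ∫ x, ‖f x - g x‖ ^ 2 ∂μ
      = ∫ x, (‖f x‖ ^ 2 + ‖g x‖ ^ 2 - 2 * (f x * (starRingEnd ℂ) (g x)).re) ∂μ :=
        integral_congr_ae (Eventually.of_forall hptw)
    _ = (∫ x, ‖f x‖ ^ 2 ∂μ) + (∫ x, ‖g x‖ ^ 2 ∂μ)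
        - 2 * (∫ x, f x * (starRingEnd ℂ) (g x) ∂μ).re := by
        have hsum : Integrable (fun x => ‖f x‖ ^ 2 + ‖g x‖ ^ 2) μ := hif.add hig
        have h2c : Integrable (fun x => 2 * (f x * (starRingEnd ℂ) (g x)).re) μ :=
          hire.const_mul 2
        rw [integral_sub hsum h2c, integral_add hif hig, integral_const_mul 2]
        congr 1
        have := integral_re hiprod
        simp only [RCLike.re_to_complex] at this
        rw [this]

lemma integral_norm_sub_const_sq {f : Ω → ℂ} (hfm : Measurable f)
    {Mf : ℝ} (hfb : ∀ x, ‖f x‖ ≤ Mf) (c : ℂ) :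
    ∫ x, ‖f x - c‖ ^ 2 ∂μ = (∫ x, ‖f x‖ ^ 2 ∂μ) + ‖c‖ ^ 2
      - 2 * ((∫ x, f x ∂μ) * (starRingEnd ℂ) c).re := by
  have := integral_norm_sub_sq (μ := μ) hfm (measurable_const : Measurable fun _ : Ω => c)
    hfb (fun _ => le_refl ‖c‖)
  rw [this, integral_mul_const]
  simp

lemma variance_min {f : Ω → ℂ} (hfm : Measurable f) {Mf : ℝ} (hfb : ∀ x, ‖f x‖ ≤ Mf) (c : ℂ) :
    ∫ x, ‖f x - (∫ y, f y ∂μ)‖ ^ 2 ∂μ ≤ ∫ x, ‖f x - c‖ ^ 2 ∂μ := by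
  rw [integral_norm_sub_const_sq hfm hfb c, integral_norm_sub_const_sq hfm hfb (∫ y, f y ∂μ)]
  set I := ∫ y, f y ∂μ
  have key : ‖I‖ ^ 2 - 2 * (I * (starRingEnd ℂ) I).re ≤ ‖c‖ ^ 2 - 2 * (I * (starRingEnd ℂ) c).re := by
    have h1 : ‖I - c‖ ^ 2 = ‖I‖ ^ 2 + ‖c‖ ^ 2 - 2 * (I * (starRingEnd ℂ) c).re :=
      norm_sub_sq_complex I c
    have h2 : ‖I - I‖ ^ 2 = ‖I‖ ^ 2 + ‖I‖ ^ 2 - 2 * (I * (starRingEnd ℂ) I).re :=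
      norm_sub_sq_complex I I
    have h3 : (0:ℝ) ≤ ‖I - c‖ ^ 2 := by positivity
    have h4 : ‖I - I‖ ^ 2 = 0 := by simp
    nlinarith
  linarith


lemma NT_add_le {f g : Ω → ℂ} (hf : MemLp f 2 μ) (hg : MemLp g 2 μ) :
    (eLpNorm (f + g) 2 μ).toReal ≤ (eLpNorm f 2 μ).toReal + (eLpNorm g 2 μ).toReal := by
  calc (eLpNorm (f + g) 2 μ).toReal
      ≤ (eLpNorm f 2 μ + eLpNorm g 2 μ).toReal := by
        apply ENNReal.toReal_mono (ENNReal.add_ne_top.2 ⟨hf.eLpNorm_ne_top, hg.eLpNorm_ne_top⟩)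
        exact eLpNorm_add_le hf.aestronglyMeasurable hg.aestronglyMeasurable (by norm_num)
    _ = _ := ENNReal.toReal_add hf.eLpNorm_ne_top hg.eLpNorm_ne_top



end Helpers

section Mix
variable {H X₀ : Type*} [Group H] [MeasurableSpace X₀] {μ₀ : Measure X₀}
  {μ : Measure (H → X₀)}

lemma indepFun_cylfun_shift (hμ : IsBernoulliProduct μ₀ μ) {T : Finset H}
    {φ : (∀ _ : T, X₀) → ℂ} (hφ : Measurable φ) {h : H}
    (hdisj : ∀ t ∈ T, h⁻¹ * t ∉ T) :
    ProbabilityTheory.IndepFun (fun x : H → X₀ => φ (restr T (bernoulliShift h x)))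
      (fun x : H → X₀ => φ (restr T x)) μ := by
  classical
  set T' := T.image (fun t => h⁻¹ * t) with hT'
  have hdis : Disjoint T' T := by
    rw [Finset.disjoint_left]
    intro t' ht' htT
    rw [hT', Finset.mem_image] at ht'
    obtain ⟨t, ht, rfl⟩ := ht'
    exact hdisj t ht htT
  have hbase := (iIndepFun_coords hμ).indepFun_finset T' T hdis
    (fun i => measurable_pi_apply i)
  set ψ : (∀ _ : T', X₀) → ℂ :=
    fun y => φ (fun i : T => y ⟨h⁻¹ * (i : H), Finset.mem_image_of_mem _ i.2⟩) with hψdef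
  have hψ : Measurable ψ := hφ.comp (measurable_pi_lambda _ fun i => measurable_pi_apply _)
  have hcomp := hbase.comp hψ hφ
  exact hcomp

lemma mix_lemma (hμ : IsBernoulliProduct μ₀ μ) {a : (H → X₀) → ℂ}
    (ham : Measurable a) {M : ℝ} (hab : ∀ x, ‖a x‖ ≤ M)
    (hnc : ¬ ∃ c : ℂ, a =ᵐ[μ] fun _ => c) :
    ∃ δ : ℝ, 0 < δ ∧ ∃ S : Finset H, ∀ h : H, h ∉ S →
      δ ≤ (eLpNorm (a - fun y => a (bernoulliShift h y)) 2 μ).toReal := by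
  classical
  have hprob : IsProbabilityMeasure μ := hμ.1
  have hma : MemLp a 2 μ := memℒp_two_of_bound ham.aestronglyMeasurable M hab
  set Ia := ∫ x, a x ∂μ with hIa
  set V := (eLpNorm (fun x => a x - Ia) 2 μ).toReal with hV
  have hmaI : MemLp (fun x => a x - Ia) 2 μ :=
    memℒp_two_of_bound ((ham.sub measurable_const).aestronglyMeasurable) (M + ‖Ia‖)
      (fun x => (norm_sub_le _ _).trans (add_le_add_left (hab x) _))
  have hVpos : 0 < V := by
    rcases eq_or_lt_of_le (ENNReal.toReal_nonneg :
      (0:ℝ) ≤ (eLpNorm (fun x => a x - Ia) 2 μ).toReal) with heq | hlt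
    · exfalso
      have h0 : eLpNorm (fun x => a x - Ia) 2 μ = 0 := by
        have hne := hmaI.eLpNorm_ne_top
        exact (ENNReal.toReal_eq_zero_iff _).1 heq.symm |>.resolve_right hne
      have := (eLpNorm_eq_zero_iff hmaI.aestronglyMeasurable (by norm_num)).1 h0
      refine hnc ⟨Ia, ?_⟩
      filter_upwards [this] with x hx
      have : a x - Ia = 0 := hx
      simpa [sub_eq_zero] using this
    · exact hlt
  set ε := V / 8 with hε
  have hεpos : 0 < ε := by positivity
  obtain ⟨b, hbcyl, hbapprox⟩ := exists_cylfun_approx (hma)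
    (ε := ENNReal.ofReal ε) (by simpa using hεpos)
  obtain ⟨T, φ, hφ, ⟨Mb, hMb⟩, rfl⟩ := hbcyl
  set b : (H → X₀) → ℂ := fun x => φ (restr T x) with hbdef
  have hbm : Measurable b := hφ.comp (measurable_restr T)
  have hmb : MemLp b 2 μ := memℒp_two_of_bound hbm.aestronglyMeasurable Mb (fun x => hMb _)
  -- the distance from a to b in L²
  have hab2 : (eLpNorm (fun x => a x - b x) 2 μ).toReal ≤ ε := by
    have : (eLpNorm (a - b) 2 μ).toReal ≤ (ENNReal.ofReal ε).toReal :=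
      ENNReal.toReal_mono ENNReal.ofReal_ne_top hbapprox
    rw [ENNReal.toReal_ofReal hεpos.le] at this
    exact this
  refine ⟨V / 2, by positivity, T * T⁻¹, fun h hS => ?_⟩
  -- disjointness condition
  have hdisj : ∀ t ∈ T, h⁻¹ * t ∉ T := by
    intro t ht hcon
    have heq : h = t * (h⁻¹ * t)⁻¹ := by group
    exact hS (heq ▸ Finset.mul_mem_mul ht (Finset.mem_inv.2 ⟨_, hcon, rfl⟩))
  -- shifted functions
  set π : (H → X₀) → (H → X₀) := bernoulliShift h with hπdef
  have hπm : Measurable π := measurable_bernoulliShift h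
  have hmp : MeasurePreserving π μ μ := measurePreserving_bernoulliShift hμ h
  set aπ : (H → X₀) → ℂ := fun x => a (π x) with haπ
  set bπ : (H → X₀) → ℂ := fun x => b (π x) with hbπ
  have haπm : Measurable aπ := ham.comp hπm
  have hbπm : Measurable bπ := hbm.comp hπm
  have hmaπ : MemLp aπ 2 μ := memℒp_two_of_bound haπm.aestronglyMeasurable M (fun x => hab _)
  have hmbπ : MemLp bπ 2 μ := memℒp_two_of_bound hbπm.aestronglyMeasurable Mb (fun x => hMb _)
  -- independence
  have hindep : ProbabilityTheory.IndepFun bπ b μ := indepFun_cylfun_shift hμ hφ hdisj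
  -- integrals transported by the shift
  have hIbπ : ∀ (u : (H → X₀) → ℂ), Measurable u → ∫ x, u (π x) ∂μ = ∫ x, u x ∂μ := by
    intro u hu
    nth_rewrite 2 [← hmp.map_eq]
    refine (integral_map hπm.aemeasurable ?_).symm
    rw [hmp.map_eq]
    exact hu.aestronglyMeasurable
  set Ib := ∫ x, b x ∂μ with hIb
  -- key independence identity
  have hJ : ∫ x, b x * (starRingEnd ℂ) (bπ x) ∂μ = Ib * (starRingEnd ℂ) Ib := by
    have hconjm : Measurable fun x => (starRingEnd ℂ) (bπ x) :=
      Complex.continuous_conj.measurable.comp hbπm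
    have hind2 : ProbabilityTheory.IndepFun b (fun x => (starRingEnd ℂ) (bπ x)) μ := by
      have := (hindep.symm).comp (measurable_id : Measurable fun z : ℂ => z)
        Complex.continuous_conj.measurable
      exact this
    rw [indep_integral_mul hind2 hbm hconjm Mb Mb (fun x => hMb _)
      (fun x => by rw [RCLike.norm_conj]; exact hMb _)]
    congr 1
    rw [integral_conj]
    congr 1
    exact hIbπ b hbm
  -- E = 2 D
  have hNorm2 : ∫ x, ‖bπ x‖ ^ 2 ∂μ = ∫ x, ‖b x‖ ^ 2 ∂μ := by
    have : (fun x => ‖b x‖ ^ 2) ∘ π = fun x => ‖bπ x‖ ^ 2 := rfl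
    have hmeasmap : AEStronglyMeasurable (fun y => ‖b y‖ ^ 2) (Measure.map π μ) := by
      rw [hmp.map_eq]
      exact (hbm.norm.pow_const 2).aestronglyMeasurable
    calc ∫ x, ‖bπ x‖ ^ 2 ∂μ = ∫ x, ‖b (π x)‖ ^ 2 ∂μ := rfl
      _ = ∫ y, ‖b y‖ ^ 2 ∂(Measure.map π μ) := (integral_map hπm.aemeasurable hmeasmap).symm
      _ = ∫ x, ‖b x‖ ^ 2 ∂μ := by rw [hmp.map_eq]
  have hE : ∫ x, ‖b x - bπ x‖ ^ 2 ∂μ = 2 * ((∫ x, ‖b x‖ ^ 2 ∂μ) - ‖Ib‖ ^ 2) := by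
    rw [integral_norm_sub_sq hbm hbπm (fun x => hMb _) (fun x => hMb _), hNorm2, hJ]
    have : (Ib * (starRingEnd ℂ) Ib).re = ‖Ib‖ ^ 2 := by
      rw [Complex.mul_conj, Complex.ofReal_re, ← Complex.sq_norm]
    rw [this]; ring
  have hD : ∫ x, ‖b x - Ib‖ ^ 2 ∂μ = (∫ x, ‖b x‖ ^ 2 ∂μ) - ‖Ib‖ ^ 2 := by
    rw [integral_norm_sub_const_sq hbm (fun x => hMb _) Ib]
    have : ((∫ x, b x ∂μ) * (starRingEnd ℂ) Ib).re = ‖Ib‖ ^ 2 := by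
      rw [← hIb, Complex.mul_conj, Complex.ofReal_re, ← Complex.sq_norm]
    rw [this]; ring
  -- MemLp of differences
  have hmbbπ : MemLp (fun x => b x - bπ x) 2 μ :=
    memℒp_two_of_bound (hbm.sub hbπm).aestronglyMeasurable (Mb + Mb)
      (fun x => (norm_sub_le _ _).trans (add_le_add (hMb _) (hMb _)))
  have hmbI : MemLp (fun x => b x - Ib) 2 μ :=
    memℒp_two_of_bound (hbm.sub measurable_const).aestronglyMeasurable (Mb + ‖Ib‖)
      (fun x => (norm_sub_le _ _).trans (add_le_add_left (hMb _) _))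
  have hmaIb : MemLp (fun x => a x - Ib) 2 μ :=
    memℒp_two_of_bound (ham.sub measurable_const).aestronglyMeasurable (M + ‖Ib‖)
      (fun x => (norm_sub_le _ _).trans (add_le_add_left (hab x) _))
  -- real quantities
  set NB := (eLpNorm (fun x => b x - bπ x) 2 μ).toReal with hNB
  set DB := (eLpNorm (fun x => b x - Ib) 2 μ).toReal with hDB
  -- NB ≥ DB
  have hNBDB : DB ≤ NB := by
    have h1 : NB ^ 2 = 2 * (DB ^ 2) := by
      rw [hNB, hDB, sq_toReal_eLpNorm hmbbπ, sq_toReal_eLpNorm hmbI, hE, hD]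
    have h2 : DB ^ 2 ≤ NB ^ 2 := by nlinarith [sq_nonneg DB]
    exact (pow_le_pow_iff_left₀ (by positivity) (by positivity) (by norm_num)).1 h2
  -- DB ≥ V - 2ε
  have hDBlow : V - 2 * ε ≤ DB := by
    have haIb : V ≤ (eLpNorm (fun x => a x - Ib) 2 μ).toReal := by
      have h1 : ((eLpNorm (fun x => a x - Ia) 2 μ).toReal) ^ 2
          ≤ ((eLpNorm (fun x => a x - Ib) 2 μ).toReal) ^ 2 := by
        rw [sq_toReal_eLpNorm hmaI, sq_toReal_eLpNorm hmaIb]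
        exact variance_min ham hab Ib
      have := (pow_le_pow_iff_left₀ (by positivity) (by positivity)
        (by norm_num : (2:ℕ) ≠ 0)).1 h1
      exact this
    -- triangle: a - Ib = (a - b) + (b - Ib)
    have htri : (eLpNorm (fun x => a x - Ib) 2 μ).toReal
        ≤ (eLpNorm (fun x => a x - b x) 2 μ).toReal + DB := by
      have heqf : (fun x => a x - Ib) = (fun x => a x - b x) + (fun x => b x - Ib) := by
        ext x; simp
      rw [heqf]
      exact NT_add_le (memℒp_two_of_bound (ham.sub hbm).aestronglyMeasurable (M + Mb)
        (fun x => (norm_sub_le _ _).trans (add_le_add (hab x) (hMb _)))) hmbI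
    linarith
  -- triangle for the main term
  have hmab : MemLp (fun x => a x - b x) 2 μ :=
    memℒp_two_of_bound (ham.sub hbm).aestronglyMeasurable (M + Mb)
      (fun x => (norm_sub_le _ _).trans (add_le_add (hab x) (hMb _)))
  have hmaπbπ : MemLp (fun x => aπ x - bπ x) 2 μ :=
    memℒp_two_of_bound (haπm.sub hbπm).aestronglyMeasurable (M + Mb)
      (fun x => (norm_sub_le _ _).trans (add_le_add (hab _) (hMb _)))
  have hmaaπ : MemLp (fun x => a x - aπ x) 2 μ :=
    memℒp_two_of_bound (ham.sub haπm).aestronglyMeasurable (M + M)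
      (fun x => (norm_sub_le _ _).trans (add_le_add (hab _) (hab _)))
  have haπbπ : (eLpNorm (fun x => aπ x - bπ x) 2 μ).toReal ≤ ε := by
    have hcomp : (fun x => aπ x - bπ x) = (fun x => a x - b x) ∘ π := rfl
    rw [hcomp, eLpNorm_comp_measurePreserving (show AEStronglyMeasurable (fun x => a x - b x) μ from
      (ham.sub hbm).aestronglyMeasurable) hmp]
    exact hab2
  have hbig : NB ≤ (eLpNorm (fun x => a x - aπ x) 2 μ).toReal + 2 * ε := by
    have heqf : (fun x => b x - bπ x) =
        ((fun x => b x - a x) + (fun x => a x - aπ x)) + (fun x => aπ x - bπ x) := by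
      ext x; simp
    have hmba : MemLp (fun x => b x - a x) 2 μ :=
      memℒp_two_of_bound (hbm.sub ham).aestronglyMeasurable (Mb + M)
        (fun x => (norm_sub_le _ _).trans (add_le_add (hMb _) (hab x)))
    have hba : (eLpNorm (fun x => b x - a x) 2 μ).toReal ≤ ε := by
      have : (fun x => b x - a x) = -(fun x => a x - b x) := by ext x; simp
      rw [this, eLpNorm_neg]
      exact hab2
    calc NB = (eLpNorm (((fun x => b x - a x) + (fun x => a x - aπ x))
          + (fun x => aπ x - bπ x)) 2 μ).toReal := by rw [hNB, heqf]
      _ ≤ (eLpNorm ((fun x => b x - a x) + (fun x => a x - aπ x)) 2 μ).toReal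
          + (eLpNorm (fun x => aπ x - bπ x) 2 μ).toReal :=
            NT_add_le (hmba.add hmaaπ) hmaπbπ
      _ ≤ ((eLpNorm (fun x => b x - a x) 2 μ).toReal
          + (eLpNorm (fun x => a x - aπ x) 2 μ).toReal)
          + (eLpNorm (fun x => aπ x - bπ x) 2 μ).toReal :=
            add_le_add_left (NT_add_le hmba hmaaπ) _
      _ ≤ (eLpNorm (fun x => a x - aπ x) 2 μ).toReal + 2 * ε := by linarith
  -- final
  have hgoal : V / 2 ≤ (eLpNorm (fun x => a x - aπ x) 2 μ).toReal := by
    have : V - 4 * ε ≤ (eLpNorm (fun x => a x - aπ x) 2 μ).toReal := by linarith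
    calc V / 2 ≤ V - 4 * ε := by rw [hε]; linarith
      _ ≤ _ := this
  have hfinal : (a - fun y => a (bernoulliShift h y)) = fun x => a x - aπ x := rfl
  rw [hfinal]
  exact hgoal


end Mix

end Stmt6Proof

open Stmt6Proof in
/-- inequality (**) in the proof of Lemma 2.3. Given bounded measurable
`a₁, …, a_m`, none a.e. constant, with `⋂_j F_j = {e}` where
`F_j = {h : a_j ∘ π_h = a_j a.e.}`, there is `C > 0` such that for every square-summable
`x : H → ℂ`,
`max_j (Σ_h |x h|² ‖a_j − a_j∘π_h‖₂²)^½ ≥ C (Σ_{h ≠ e} |x h|²)^½`. -/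
theorem stmt_6 {H X₀ : Type*} [Group H] [Countable H] [Infinite H]
    [MeasurableSpace X₀] (μ₀ : Measure X₀) [IsProbabilityMeasure μ₀]
    (μ : Measure (H → X₀)) (hμ : IsBernoulliProduct μ₀ μ)
    (m : ℕ) (a : Fin m → (H → X₀) → ℂ)
    (hmeas : ∀ j, Measurable (a j))
    (hbdd : ∀ j, ∃ M : ℝ, ∀ x, ‖a j x‖ ≤ M)
    (hnc : ∀ j, ¬ ∃ c : ℂ, a j =ᵐ[μ] fun _ => c)
    (hF : (⋂ j, {h : H | (fun x => a j (bernoulliShift h x)) =ᵐ[μ] a j}) = {(1 : H)}) :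
    ∃ C : ℝ, 0 < C ∧ ∀ x : H → ℂ, Summable (fun h : H => ‖x h‖ ^ 2) →
      ∃ j : Fin m,
        C * Real.sqrt (∑' h : {h : H // h ≠ 1}, ‖x h‖ ^ 2) ≤
          Real.sqrt (∑' h : H,
            ‖x h‖ ^ 2 *
              ((eLpNorm (a j - fun y => a j (bernoulliShift h y)) 2 μ).toReal) ^ 2) := by
  classical
  have hprob : IsProbabilityMeasure μ := hμ.1
  -- m is positive
  have hm : 0 < m := by
    by_contra hm0
    push_neg at hm0
    interval_cases m
    obtain ⟨h, hh⟩ := exists_ne (1 : H)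
    have : h ∈ (⋂ j : Fin 0, {h : H | (fun x => a j (bernoulliShift h x)) =ᵐ[μ] a j}) := by
      simp
    rw [hF] at this
    exact hh this
  -- notation
  set NT : Fin m → H → ℝ := fun j h =>
    (eLpNorm (a j - fun y => a j (bernoulliShift h y)) 2 μ).toReal with hNT
  -- bounds
  choose M hM using hbdd
  set M' : Fin m → ℝ := fun j => max (M j) 0 with hM'
  have hM'b : ∀ j x, ‖a j x‖ ≤ M' j := fun j x => (hM j x).trans (le_max_left _ _)
  have hM'nn : ∀ j, 0 ≤ M' j := fun j => le_max_right _ _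
  have hdiffmeas : ∀ j h, Measurable (a j - fun y => a j (bernoulliShift h y)) := by
    intro j h
    exact (hmeas j).sub ((hmeas j).comp (measurable_bernoulliShift h))
  have hdiffbound : ∀ j h x, ‖(a j - fun y => a j (bernoulliShift h y)) x‖ ≤ 2 * M' j := by
    intro j h x
    calc ‖a j x - a j (bernoulliShift h x)‖ ≤ ‖a j x‖ + ‖a j (bernoulliShift h x)‖ :=
          norm_sub_le _ _
      _ ≤ M' j + M' j := add_le_add (hM'b j x) (hM'b j _)
      _ = 2 * M' j := by ring
  have hdiffmem : ∀ j h, MemLp (a j - fun y => a j (bernoulliShift h y)) 2 μ := fun j h =>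
    memℒp_two_of_bound (hdiffmeas j h).aestronglyMeasurable (2 * M' j) (hdiffbound j h)
  have hNTnn : ∀ j h, 0 ≤ NT j h := fun j h => ENNReal.toReal_nonneg
  have hNTle : ∀ j h, NT j h ≤ 2 * M' j := by
    intro j h
    have h1 : NT j h ^ 2 ≤ (2 * M' j) ^ 2 := by
      rw [hNT]
      rw [sq_toReal_eLpNorm (hdiffmem j h)]
      calc ∫ x, ‖(a j - fun y => a j (bernoulliShift h y)) x‖ ^ 2 ∂μ
          ≤ ∫ _x, (2 * M' j) ^ 2 ∂μ := by
            apply integral_mono_of_nonneg (Eventually.of_forall fun x => by positivity)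
              (integrable_const _)
            exact Eventually.of_forall fun x =>
              pow_le_pow_left₀ (norm_nonneg _) (hdiffbound j h x) 2
        _ = (2 * M' j) ^ 2 := by simp
    have h2 : 0 ≤ 2 * M' j := by positivity
    nlinarith [hNTnn j h]
  -- positivity of NT for h ∉ F j
  have hNTpos : ∀ (j : Fin m) (h : H),
      ¬ ((fun x => a j (bernoulliShift h x)) =ᵐ[μ] a j) → 0 < NT j h := by
    intro j h hne
    rw [hNT]
    apply ENNReal.toReal_pos ?_ (hdiffmem j h).eLpNorm_ne_top
    intro h0
    have := (eLpNorm_eq_zero_iff (hdiffmem j h).aestronglyMeasurable (by norm_num)).1 h0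
    apply hne
    filter_upwards [this] with x hx
    have : a j x - a j (bernoulliShift h x) = 0 := hx
    have := sub_eq_zero.1 this
    exact this.symm
  -- uniform lower bound: ∃ C' > 0, ∀ h ≠ 1, ∃ j, C' ≤ NT j h
  have hkey : ∃ C' : ℝ, 0 < C' ∧ ∀ h : H, h ≠ 1 → ∃ j, C' ≤ NT j h := by
    haveI : Nonempty (Fin m) := ⟨⟨0, hm⟩⟩
    set j₀ : Fin m := ⟨0, hm⟩ with hj₀
    obtain ⟨δ, hδpos, S, hS⟩ := mix_lemma hμ (hmeas j₀) (hM'b j₀) (hnc j₀)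
    have hSbound : ∀ h ∉ S, δ ≤ NT j₀ h := fun h hh => hS h hh
    -- for h in S.erase 1, some j works
    have hbadpos : ∀ h ∈ S.erase 1, ∃ j, 0 < NT j h := by
      intro h hh
      have h1 : h ≠ 1 := Finset.ne_of_mem_erase hh
      have : h ∉ ({1} : Set H) := by simpa using h1
      rw [← hF] at this
      simp only [Set.mem_iInter, Set.mem_setOf_eq, not_forall] at this
      obtain ⟨j, hj⟩ := this
      exact ⟨j, hNTpos j h hj⟩
    -- max over j
    set g : H → ℝ := fun h => Finset.univ.sup' (Finset.univ_nonempty (α := Fin m)) (fun j => NT j h)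
      with hg
    have hgpos : ∀ h ∈ S.erase 1, 0 < g h := by
      intro h hh
      obtain ⟨j, hj⟩ := hbadpos h hh
      exact lt_of_lt_of_le hj (Finset.le_sup' (fun j => NT j h) (Finset.mem_univ j))
    have hgmem : ∀ h, ∃ j, g h = NT j h := by
      intro h
      obtain ⟨j, -, hj⟩ := Finset.exists_mem_eq_sup' (Finset.univ_nonempty (α := Fin m))
        (fun j => NT j h)
      exact ⟨j, hj⟩
    by_cases hBad : (S.erase 1).Nonempty
    · refine ⟨min δ ((S.erase 1).inf' hBad g), lt_min hδpos ?_, ?_⟩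
      · rw [Finset.lt_inf'_iff]
        exact hgpos
      · intro h h1
        by_cases hhS : h ∈ S
        · have hmem : h ∈ S.erase 1 := Finset.mem_erase.2 ⟨h1, hhS⟩
          obtain ⟨j, hj⟩ := hgmem h
          refine ⟨j, ?_⟩
          calc min δ ((S.erase 1).inf' hBad g) ≤ (S.erase 1).inf' hBad g := min_le_right _ _
            _ ≤ g h := Finset.inf'_le _ hmem
            _ = NT j h := hj
        · exact ⟨j₀, (min_le_left _ _).trans (hSbound h hhS)⟩
    · refine ⟨δ, hδpos, fun h h1 => ?_⟩
      by_cases hhS : h ∈ S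
      · exact (hBad ⟨h, Finset.mem_erase.2 ⟨h1, hhS⟩⟩).elim
      · exact ⟨j₀, hSbound h hhS⟩
  obtain ⟨C', hC'pos, hC'⟩ := hkey
  refine ⟨C' / m, by positivity, fun x hx => ?_⟩
  set t := ∑' h : {h : H // h ≠ 1}, ‖x (h : H)‖ ^ 2 with ht
  have htnn : 0 ≤ t := tsum_nonneg fun h => by positivity
  set s : Fin m → ℝ := fun j => ∑' h : H, ‖x h‖ ^ 2 * NT j h ^ 2 with hs
  have hsummand_nn : ∀ j (h : H), 0 ≤ ‖x h‖ ^ 2 * NT j h ^ 2 := fun j h => by positivity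
  have hsummable : ∀ j, Summable (fun h : H => ‖x h‖ ^ 2 * NT j h ^ 2) := by
    intro j
    apply Summable.of_nonneg_of_le (hsummand_nn j)
      (fun h => ?_) (hx.mul_right ((2 * M' j) ^ 2))
    have := hNTle j h
    have h0 := hNTnn j h
    have h1 : NT j h ^ 2 ≤ (2 * M' j) ^ 2 := by nlinarith
    have h2 : (0:ℝ) ≤ ‖x h‖ ^ 2 := by positivity
    nlinarith
  have hsnn : ∀ j, 0 ≤ s j := fun j => tsum_nonneg (hsummand_nn j)
  -- key inequality : C'^2 * t ≤ ∑ j, s j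
  have hmain : C' ^ 2 * t ≤ ∑ j : Fin m, s j := by
    have hsubsummable : ∀ j, Summable (fun h : {h : H // h ≠ 1} => ‖x (h:H)‖ ^ 2 * NT j (h:H) ^ 2) :=
      fun j => (hsummable j).subtype _
    have hsubsum : Summable (fun h : {h : H // h ≠ 1} =>
        ∑ j : Fin m, ‖x (h:H)‖ ^ 2 * NT j (h:H) ^ 2) :=
      summable_sum (fun j _ => hsubsummable j)
    calc C' ^ 2 * t = ∑' h : {h : H // h ≠ 1}, C' ^ 2 * ‖x (h:H)‖ ^ 2 := by
          rw [ht, tsum_mul_left]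
      _ ≤ ∑' h : {h : H // h ≠ 1}, ∑ j : Fin m, ‖x (h:H)‖ ^ 2 * NT j (h:H) ^ 2 := by
          apply Summable.tsum_le_tsum ?_ ((hx.subtype _).mul_left (C' ^ 2)) hsubsum
          intro h
          obtain ⟨j, hj⟩ := hC' (h : H) h.2
          have h1 : C' ^ 2 ≤ NT j (h:H) ^ 2 := by nlinarith [hNTnn j (h:H)]
          calc C' ^ 2 * ‖x (h:H)‖ ^ 2 ≤ NT j (h:H) ^ 2 * ‖x (h:H)‖ ^ 2 := by
                have : (0:ℝ) ≤ ‖x (h:H)‖ ^ 2 := by positivity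
                nlinarith
            _ = ‖x (h:H)‖ ^ 2 * NT j (h:H) ^ 2 := by ring
            _ ≤ ∑ j : Fin m, ‖x (h:H)‖ ^ 2 * NT j (h:H) ^ 2 :=
              Finset.single_le_sum (fun j _ => hsummand_nn j (h:H)) (Finset.mem_univ j)
      _ = ∑ j : Fin m, ∑' h : {h : H // h ≠ 1}, ‖x (h:H)‖ ^ 2 * NT j (h:H) ^ 2 :=
          Summable.tsum_finsetSum (fun j _ => hsubsummable j)
      _ ≤ ∑ j : Fin m, s j := by
          apply Finset.sum_le_sum
          intro j _
          rw [hs]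
          have : ∑' h : {h : H // h ≠ 1}, ‖x (h:H)‖ ^ 2 * NT j (h:H) ^ 2
              = ∑' h : H, Set.indicator {h : H | h ≠ 1} (fun h => ‖x h‖ ^ 2 * NT j h ^ 2) h :=
            tsum_subtype {h : H | h ≠ 1} (fun h => ‖x h‖ ^ 2 * NT j h ^ 2)
          rw [this]
          apply Summable.tsum_le_tsum ?_ ((hsummable j).indicator _) (hsummable j)
          intro h
          by_cases hh : h ∈ {h : H | h ≠ 1}
          · rw [Set.indicator_of_mem hh]
          · rw [Set.indicator_of_notMem hh]
            exact hsummand_nn j h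
  -- conclude: some j with s j ≥ C'^2 * t / m
  have hexists : ∃ j : Fin m, C' ^ 2 * t / m ≤ s j := by
    by_contra hcon
    push_neg at hcon
    have hlt : ∑ j : Fin m, s j < ∑ _j : Fin m, C' ^ 2 * t / m :=
      Finset.sum_lt_sum_of_nonempty (by
        haveI : Nonempty (Fin m) := ⟨⟨0, hm⟩⟩
        exact Finset.univ_nonempty) (fun j _ => hcon j)
    rw [Finset.sum_const, Finset.card_univ, Fintype.card_fin, nsmul_eq_mul] at hlt
    have : (m : ℝ) * (C' ^ 2 * t / m) = C' ^ 2 * t := by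
      field_simp
    rw [this] at hlt
    linarith
  obtain ⟨j, hj⟩ := hexists
  refine ⟨j, ?_⟩
  rw [Real.le_sqrt (by positivity)]
  have h1 : (C' / m * Real.sqrt t) ^ 2 = C' ^ 2 / m ^ 2 * t := by
    rw [mul_pow, Real.sq_sqrt htnn]
    ring
  rw [h1]
  have hm1 : (1:ℝ) ≤ m := by exact_mod_cast hm
  have h2 : C' ^ 2 / m ^ 2 * t ≤ C' ^ 2 * t / m := by
    have hX : (0:ℝ) ≤ C' ^ 2 * t := mul_nonneg (sq_nonneg C') htnn
    have hmn : (0:ℝ) ≤ m := by positivity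
    rw [div_mul_eq_mul_div, div_le_div_iff₀ (by positivity) (by positivity)]
    nlinarith [mul_nonneg (mul_nonneg hX hmn) (sub_nonneg.2 hm1)]
  exact h2.trans hj
  · exact hsnn j
end

section
/- Assume there exists a bounded measurable Γ-invariant function f : Y → ℂ with ∫ f dν = 0 and f not ν-a.e. equal to 0. Then for every g ∈ G with g ≠ (e,e) and every measurable set P ⊆ Z with μ(P) > 0, there exists a bounded measurable function c : Z → ℂ, invariant under the diagonal Γ-action δ (i.e., c ∘ δ_γ = c μ-a.e. for every γ ∈ Γ), such that μ({z ∈ P : c(σ_g⁻¹(z)) ≠ c(z)}) > 0. -/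
open MeasureTheory Filter

/-- The action of `G = H × K` on the disjoint union `I = H ⊔ K`:
`(h, k) • x = h x` for `x ∈ H` and `(h, k) • x = k x` for `x ∈ K`. -/
def sumAct {H K : Type*} [Group H] [Group K] (g : H × K) : H ⊕ K → H ⊕ K :=
  Sum.elim (fun x => Sum.inl (g.1 * x)) (fun x => Sum.inr (g.2 * x))

/-- The generalized Bernoulli action of `G = H × K` on `Z = ∏_{j ∈ H ⊔ K} Y`:
`(σ_g z)_j = z_{g⁻¹ • j}`. -/
def genBernoulliShift {H K Y : Type*} [Group H] [Group K] (g : H × K)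
    (z : H ⊕ K → Y) : H ⊕ K → Y :=
  fun j => z (sumAct g⁻¹ j)

/-- `μ` is the product probability measure `∏_{j ∈ I} ν` on `I → Y`, characterized by its
values on measurable cylinder sets. -/
def IsProductMeasure {I Y : Type*} [MeasurableSpace Y] (ν : Measure Y)
    (μ : Measure (I → Y)) : Prop :=
  IsProbabilityMeasure μ ∧
    ∀ (s : Finset I) (E : I → Set Y), (∀ j ∈ s, MeasurableSet (E j)) →
      μ {z : I → Y | ∀ j ∈ s, z j ∈ E j} = ∏ j ∈ s, ν (E j)

/-- The coordinatewise action of an element `γ` of `∏_i Δ_i` on `Y = ∏_{i ∈ ℕ} X₀`: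
`(γ • y)_i = α_i(γ_i)(y_i)`. -/
def coordAct {X₀ : Type*} {Δ : ℕ → Type*} [∀ i, Group (Δ i)]
    (α : ∀ i, Δ i → X₀ → X₀) (γ : ∀ i, Δ i) (y : ℕ → X₀) : ℕ → X₀ :=
  fun i => α i (γ i) (y i)

/-- `γ ∈ ∏_i Δ_i` belongs to the direct sum `Γ = ⊕_i Δ_i` iff it is finitely supported. -/
def FinSupported {Δ : ℕ → Type*} [∀ i, Group (Δ i)] (γ : ∀ i, Δ i) : Prop :=
  Set.Finite {i : ℕ | γ i ≠ 1}

section Greedy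

variable {G : Type*} [Group G] [DecidableEq G] [Infinite G]

private noncomputable def pairNext (h : G) (s : Finset G) : G :=
  (Infinite.exists_notMem_finset (s ∪ s.image fun y => h⁻¹ * y)).choose

private lemma pairNext_spec (h : G) (s : Finset G) :
    pairNext h s ∉ s ∧ h * pairNext h s ∉ s := by
  have hs : pairNext h s ∉ s ∪ s.image fun y => h⁻¹ * y :=
    (Infinite.exists_notMem_finset (s ∪ s.image fun y => h⁻¹ * y)).choose_spec
  rw [Finset.mem_union] at hs
  push_neg at hs
  exact ⟨hs.1, fun hm => hs.2 (Finset.mem_image.2 ⟨_, hm, by rw [inv_mul_cancel_left]⟩)⟩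

private noncomputable def pairF (h : G) : ℕ → Finset G
  | 0 => ∅
  | n + 1 => pairF h n ∪ {pairNext h (pairF h n), h * pairNext h (pairF h n)}

private noncomputable def pairSeq (h : G) (n : ℕ) : G := pairNext h (pairF h n)

private lemma pairF_mono (h : G) : Monotone (pairF h) := by
  apply monotone_nat_of_le_succ
  intro n
  simp only [pairF]
  exact Finset.subset_union_left

private lemma pairSeq_mem (h : G) {m n : ℕ} (hmn : m < n) :
    pairSeq h m ∈ pairF h n ∧ h * pairSeq h m ∈ pairF h n := by
  have h1 : pairSeq h m ∈ pairF h (m + 1) := by simp [pairF, pairSeq]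
  have h2 : h * pairSeq h m ∈ pairF h (m + 1) := by simp [pairF, pairSeq]
  exact ⟨pairF_mono h (Nat.succ_le_of_lt hmn) h1, pairF_mono h (Nat.succ_le_of_lt hmn) h2⟩

private lemma pairSeq_not_mem (h : G) (n : ℕ) :
    pairSeq h n ∉ pairF h n ∧ h * pairSeq h n ∉ pairF h n :=
  pairNext_spec h (pairF h n)

private lemma exists_pairSeq {h : G} (hh : h ≠ 1) :
    ∃ x : ℕ → G, Function.Injective fun q : ℕ × Bool => cond q.2 (h * x q.1) (x q.1) := by
  refine ⟨pairSeq h, ?_⟩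
  have hmem : ∀ (m n : ℕ), m < n → ∀ b : Bool,
      cond b (h * pairSeq h m) (pairSeq h m) ∈ pairF h n := by
    intro m n hmn b
    cases b
    · exact (pairSeq_mem h hmn).1
    · exact (pairSeq_mem h hmn).2
  have hnotmem : ∀ (n : ℕ) (b : Bool), cond b (h * pairSeq h n) (pairSeq h n) ∉ pairF h n := by
    intro n b
    cases b
    · exact (pairSeq_not_mem h n).1
    · exact (pairSeq_not_mem h n).2
  rintro ⟨m, b⟩ ⟨n, b'⟩ heq
  simp only at heq
  rcases lt_trichotomy m n with hmn | hmn | hmn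
  · exact absurd (heq ▸ hmem m n hmn b) (hnotmem n b')
  · subst hmn
    cases b <;> cases b' <;> simp only [Bool.cond_false, Bool.cond_true] at heq
    · rfl
    · exact absurd (right_eq_mul.mp heq) hh
    · exact absurd (mul_eq_right.mp heq) hh
    · rfl
  · exact absurd (heq ▸ hmem n m hmn b') (hnotmem m b)

end Greedy

private lemma cylinder_eq {I Y : Type*} [MeasurableSpace Y] {ν : Measure Y}
    {μ : Measure (I → Y)} (hμ : IsProductMeasure ν μ)
    {ι : Type*} [Fintype ι] (p : ι → I) (hp : Function.Injective p)
    (E : ι → Set Y) (hE : ∀ i, MeasurableSet (E i)) :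
    μ {z | ∀ i, z (p i) ∈ E i} = ∏ i, ν (E i) := by
  classical
  set q : I → Set Y := fun j => if hj : ∃ i, p i = j then E hj.choose else Set.univ with hq
  have hqp : ∀ i, q (p i) = E i := by
    intro i
    have hj : ∃ i', p i' = p i := ⟨i, rfl⟩
    simp only [hq, dif_pos hj]
    exact congrArg E (hp hj.choose_spec)
  have hset : {z : I → Y | ∀ j ∈ Finset.univ.image p, z j ∈ q j} = {z | ∀ i, z (p i) ∈ E i} := by
    ext z
    simp only [Set.mem_setOf_eq, Finset.mem_image, Finset.mem_univ, true_and]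
    constructor
    · intro hz i
      have := hz (p i) ⟨i, rfl⟩
      rwa [hqp i] at this
    · rintro hz j ⟨i, rfl⟩
      rw [hqp i]
      exact hz i
  have hmeas : ∀ j ∈ Finset.univ.image p, MeasurableSet (q j) := by
    intro j hj
    rw [Finset.mem_image] at hj
    obtain ⟨i, -, rfl⟩ := hj
    rw [hqp i]
    exact hE i
  have hcyl := hμ.2 (Finset.univ.image p) q hmeas
  rw [hset] at hcyl
  rw [hcyl, Finset.prod_image (fun x _ y _ hxy => hp hxy)]
  exact Finset.prod_congr rfl fun i _ => by rw [hqp i]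

/-- Claim 2 in the proof of Theorem 4.1: if there is a bounded measurable
`Γ`-invariant `f : Y → ℂ` with `∫ f dν = 0` and `f` not a.e. `0`, then for every
`g ≠ (e,e)` in `G = H × K` and every measurable `P ⊆ Z` of positive measure there is a
bounded measurable function `c : Z → ℂ`, invariant under the diagonal `Γ`-action `δ`,
such that `μ({z ∈ P : c(σ_g⁻¹(z)) ≠ c(z)}) > 0`. -/
theorem stmt_10 {H K X₀ : Type*} [Group H] [Group K]
    [Countable H] [Countable K] [Infinite H] [Infinite K]
    [MeasurableSpace X₀] (μ₀ : Measure X₀) [IsProbabilityMeasure μ₀]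
    (Δ : ℕ → Type*) [∀ i, Group (Δ i)] [∀ i, Finite (Δ i)]
    (α : ∀ i, Δ i → X₀ → X₀)
    (hα_one : ∀ i, α i 1 = id)
    (hα_mul : ∀ i (d d' : Δ i), α i (d * d') = α i d ∘ α i d')
    (hα_mp : ∀ i (d : Δ i), MeasurePreserving (α i d) μ₀ μ₀)
    (ν : Measure (ℕ → X₀)) (hν : IsProductMeasure μ₀ ν)
    (μ : Measure ((H ⊕ K) → (ℕ → X₀))) (hμ : IsProductMeasure ν μ)
    (hf : ∃ f : (ℕ → X₀) → ℂ, Measurable f ∧ (∃ M : ℝ, ∀ y, ‖f y‖ ≤ M) ∧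
      (∀ γ : ∀ i, Δ i, FinSupported γ → (fun y => f (coordAct α γ y)) =ᵐ[ν] f) ∧
      (∫ y, f y ∂ν) = 0 ∧ ¬ (f =ᵐ[ν] fun _ => (0 : ℂ))) :
    ∀ g : H × K, g ≠ 1 → ∀ P : Set ((H ⊕ K) → (ℕ → X₀)), MeasurableSet P → 0 < μ P →
      ∃ c : ((H ⊕ K) → (ℕ → X₀)) → ℂ, Measurable c ∧ (∃ M : ℝ, ∀ z, ‖c z‖ ≤ M) ∧
        (∀ γ : ∀ i, Δ i, FinSupported γ →
          (fun z => c (fun j => coordAct α γ (z j))) =ᵐ[μ] c) ∧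
        0 < μ {z | z ∈ P ∧ c (genBernoulliShift g⁻¹ z) ≠ c z} := by
  classical
  obtain ⟨f, hfm, ⟨M, hfM⟩, hfinv, hfint, hfne⟩ := hf
  haveI hνP : IsProbabilityMeasure ν := hν.1
  haveI hμP : IsProbabilityMeasure μ := hμ.1
  intro g hg P hPm hP
  -- the marginal of `μ` at any coordinate is `ν`
  have hmap : ∀ a : H ⊕ K, Measure.map (fun z => z a) μ = ν := by
    intro a
    refine Measure.ext fun E hE => ?_
    rw [Measure.map_apply (measurable_pi_apply a) hE]
    have hc := cylinder_eq hμ (fun _ : Unit => a)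
      (fun _ _ _ => rfl) (fun _ => E) (fun _ => hE)
    simp at hc
    exact hc
  -- pulling back null sets along coordinates
  have hnull : ∀ (a : H ⊕ K) (N : Set (ℕ → X₀)), ν N = 0 →
      μ ((fun z : (H ⊕ K) → (ℕ → X₀) => z a) ⁻¹' N) = 0 := by
    intro a N hN
    obtain ⟨N', hNN', hN'm, hN'0⟩ := exists_measurable_superset_of_null hN
    refine measure_mono_null (Set.preimage_mono hNN') ?_
    rw [← Measure.map_apply (measurable_pi_apply a) hN'm, hmap a]
    exact hN'0
  -- invariance of coordinate functions
  have hcinv : ∀ (a : H ⊕ K) (γ : ∀ i, Δ i), FinSupported γ →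
      (fun z : (H ⊕ K) → (ℕ → X₀) => f (coordAct α γ (z a))) =ᵐ[μ]
        (fun z => f (z a)) := by
    intro a γ hγ
    have h1 : ν {y | ¬ f (coordAct α γ y) = f y} = 0 := by
      have := hfinv γ hγ
      rw [Filter.EventuallyEq, ae_iff] at this
      exact this
    have h2 := hnull a _ h1
    rw [Filter.EventuallyEq, ae_iff]
    exact h2
  -- the key diagonal set in `Y × Y`
  set D : Set ((ℕ → X₀) × (ℕ → X₀)) := {w | f w.1 = f w.2} with hDdef
  have hD : MeasurableSet D :=
    measurableSet_eq_fun (hfm.comp measurable_fst) (hfm.comp measurable_snd)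
  set q : ENNReal := (ν.prod ν) D with hqdef
  -- q < 1
  have hq1 : q < 1 := by
    refine lt_of_le_of_ne prob_le_one ?_
    intro h1
    have hDc : (ν.prod ν) Dᶜ = 0 := (prob_compl_eq_zero_iff hD).2 h1
    have hae := (Measure.measure_prod_null hD.compl).1 hDc
    haveI : (ae ν).NeBot := ae_neBot.2 (IsProbabilityMeasure.ne_zero ν)
    obtain ⟨y₀, hy₀⟩ := hae.exists
    have hy₀' : ν {y | ¬ f y₀ = f y} = 0 := by
      simp at hy₀
      exact hy₀
    have hconst : ∀ᵐ y ∂ν, f y₀ = f y := by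
      rw [ae_iff]
      exact hy₀'
    have hint : ∫ y, f y ∂ν = f y₀ := by
      have := integral_congr_ae (hconst.mono fun y h => h.symm)
      rw [this]
      simp [integral_const]
    have hy00 : f y₀ = 0 := by rw [← hint]; exact hfint
    exact hfne (hconst.mono fun y h => by rw [← h, hy00])
  -- core argument, given a suitable injective family of pairs of coordinates
  have key : ∀ p : ℕ × Bool → H ⊕ K, Function.Injective p →
      (∀ i, sumAct g (p (i, false)) = p (i, true)) →
      ∃ c : ((H ⊕ K) → (ℕ → X₀)) → ℂ, Measurable c ∧ (∃ M : ℝ, ∀ z, ‖c z‖ ≤ M) ∧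
        (∀ γ : ∀ i, Δ i, FinSupported γ →
          (fun z => c (fun j => coordAct α γ (z j))) =ᵐ[μ] c) ∧
        0 < μ {z | z ∈ P ∧ c (genBernoulliShift g⁻¹ z) ≠ c z} := by
    intro p hpinj hpshift
    set X : ℕ → ((H ⊕ K) → (ℕ → X₀)) → ((ℕ → X₀) × (ℕ → X₀)) :=
      fun i z => (z (p (i, true)), z (p (i, false))) with hXdef
    have hXm : ∀ i, Measurable (X i) :=
      fun i => (measurable_pi_apply _).prodMk (measurable_pi_apply _)
    -- rectangles
    have hrect : ∀ (i : ℕ) (s t : Set (ℕ → X₀)), MeasurableSet s → MeasurableSet t →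
        μ (X i ⁻¹' (s ×ˢ t)) = ν s * ν t := by
      intro i s t hs ht
      have hpi : Function.Injective fun b : Bool => p (i, b) := by
        intro b1 b2 e
        have h2 := hpinj e
        rw [Prod.mk.injEq] at h2
        exact h2.2
      have hc := cylinder_eq hμ (fun b : Bool => p (i, b)) hpi
        (fun b => cond b s t) (fun b => by cases b; exacts [ht, hs])
      have hset : X i ⁻¹' (s ×ˢ t) =
          {z : (H ⊕ K) → (ℕ → X₀) | ∀ b : Bool, z (p (i, b)) ∈ cond b s t} := by
        ext z
        simp only [Set.mem_preimage, Set.mem_prod, Set.mem_setOf_eq, Bool.forall_bool,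
          Bool.cond_false, Bool.cond_true, hXdef]
        exact and_comm
      rw [hset, hc, Fintype.prod_bool]
      rfl
    -- distribution of each pair
    have hA : ∀ i, μ (X i ⁻¹' D) = q := by
      intro i
      have hmapX : Measure.map (X i) μ = ν.prod ν := by
        refine (Measure.prod_eq fun s t hs ht => ?_).symm
        rw [Measure.map_apply (hXm i) (hs.prod ht)]
        exact hrect i s t hs ht
      rw [← Measure.map_apply (hXm i) hD, hmapX]
    -- independence of the pair σ-algebras
    set π : ℕ → Set (Set ((H ⊕ K) → (ℕ → X₀))) := fun i =>
      {S | ∃ s t, MeasurableSet s ∧ MeasurableSet t ∧ S = X i ⁻¹' (s ×ˢ t)} with hπdef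
    have hπ : ∀ i, IsPiSystem (π i) := by
      rintro i S ⟨s, t, hs, ht, rfl⟩ T ⟨s', t', hs', ht', rfl⟩ -
      exact ⟨s ∩ s', t ∩ t', hs.inter hs', ht.inter ht', by
        rw [← Set.preimage_inter, Set.prod_inter_prod]⟩
    have hgen : ∀ i, MeasurableSpace.comap (X i) Prod.instMeasurableSpace =
        MeasurableSpace.generateFrom (π i) := by
      intro i
      rw [← generateFrom_prod, MeasurableSpace.comap_generateFrom]
      congr 1
      ext S
      constructor
      · rintro ⟨T, ⟨s, hs, t, ht, rfl⟩, rfl⟩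
        exact ⟨s, t, hs, ht, rfl⟩
      · rintro ⟨s, t, hs, ht, rfl⟩
        exact ⟨s ×ˢ t, ⟨s, hs, t, ht, rfl⟩, rfl⟩
    have hiis : ProbabilityTheory.iIndepSets π μ := by
      rw [ProbabilityTheory.iIndepSets_iff]
      intro S f' hf'
      have hch : ∀ i : {x // x ∈ S}, ∃ s t, MeasurableSet s ∧ MeasurableSet t ∧
          f' i = X i ⁻¹' (s ×ˢ t) := fun i => hf' i i.2
      choose E F hE hF hEq using hch
      have hpinj' : Function.Injective fun j : {x // x ∈ S} × Bool => p (j.1.1, j.2) := by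
        intro j j' e
        have h2 := hpinj e
        rw [Prod.mk.injEq] at h2
        exact Prod.ext (Subtype.ext h2.1) h2.2
      have hcyl := cylinder_eq hμ (fun j : {x // x ∈ S} × Bool => p (j.1.1, j.2)) hpinj'
        (fun j => cond j.2 (E j.1) (F j.1))
        (fun j => by obtain ⟨i, b⟩ := j; cases b; exacts [hF i, hE i])
      have hset2 : (⋂ i ∈ S, f' i) =
          {z : (H ⊕ K) → (ℕ → X₀) |
            ∀ j : {x // x ∈ S} × Bool, z (p (j.1.1, j.2)) ∈ cond j.2 (E j.1) (F j.1)} := by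
        ext z
        simp only [Set.mem_iInter, Set.mem_setOf_eq]
        constructor
        · rintro hz ⟨i, b⟩
          have hzi := hz i.1 i.2
          rw [hEq i] at hzi
          cases b
          · exact hzi.2
          · exact hzi.1
        · intro hz i hi
          rw [hEq ⟨i, hi⟩]
          exact ⟨hz (⟨i, hi⟩, true), hz (⟨i, hi⟩, false)⟩
      have hprod : (∏ j : {x // x ∈ S} × Bool, ν (cond j.2 (E j.1) (F j.1))) =
          ∏ i : {x // x ∈ S}, (ν (E i) * ν (F i)) := by
        rw [Fintype.prod_prod_type]
        refine Finset.prod_congr rfl fun i _ => ?_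
        rw [Fintype.prod_bool]
        rfl
      calc μ (⋂ i ∈ S, f' i) = ∏ i : {x // x ∈ S}, (ν (E i) * ν (F i)) := by
            rw [hset2, hcyl, hprod]
        _ = ∏ i ∈ S, μ (f' i) := by
            rw [← Finset.prod_coe_sort S (fun i => μ (f' i))]
            refine Finset.prod_congr rfl fun i _ => ?_
            rw [hEq i]
            exact (hrect i.1 _ _ (hE i) (hF i)).symm
    have hindep := ProbabilityTheory.iIndepSets.iIndep
      (m := fun i => MeasurableSpace.comap (X i) Prod.instMeasurableSpace)
      (fun i => (hXm i).comap_le) π hπ hgen hiis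
    have hpow : ∀ n : ℕ, μ (⋂ i ∈ Finset.range n, X i ⁻¹' D) = q ^ n := by
      intro n
      rw [ProbabilityTheory.iIndep.meas_biInter hindep (fun i _ => ⟨D, hD, rfl⟩)]
      rw [Finset.prod_congr rfl (fun i _ => hA i), Finset.prod_const, Finset.card_range]
    -- the two cases
    by_cases hex : ∃ i, 0 < μ {z | z ∈ P ∧ f (z (p (i, true))) ≠ f (z (p (i, false)))}
    · obtain ⟨i, hi⟩ := hex
      refine ⟨fun z => f (z (p (i, false))), hfm.comp (measurable_pi_apply _),
        ⟨M, fun z => hfM _⟩, fun γ hγ => hcinv (p (i, false)) γ hγ, ?_⟩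
      have hsh : ∀ z : (H ⊕ K) → (ℕ → X₀),
          genBernoulliShift g⁻¹ z (p (i, false)) = z (p (i, true)) := by
        intro z
        show z (sumAct g⁻¹⁻¹ (p (i, false))) = z (p (i, true))
        rw [inv_inv, hpshift i]
      simpa only [hsh] using hi
    · push_neg at hex
      have h0 : ∀ i, μ (P ∩ (X i ⁻¹' D)ᶜ) = 0 := by
        intro i
        have := hex i
        rw [le_zero_iff] at this
        exact this
      have hble : ∀ n : ℕ, μ P ≤ q ^ n := by
        intro n
        have hsub : P ⊆ (⋂ i ∈ Finset.range n, X i ⁻¹' D) ∪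
            ⋃ i ∈ Finset.range n, (P ∩ (X i ⁻¹' D)ᶜ) := by
          intro z hz
          by_cases hall : ∀ i ∈ Finset.range n, z ∈ X i ⁻¹' D
          · exact Or.inl (Set.mem_iInter₂.2 hall)
          · push_neg at hall
            obtain ⟨i, hi, hzi⟩ := hall
            exact Or.inr (Set.mem_biUnion hi ⟨hz, hzi⟩)
        have hU : μ (⋃ i ∈ Finset.range n, (P ∩ (X i ⁻¹' D)ᶜ)) = 0 :=
          (measure_biUnion_null_iff (Finset.range n).countable_toSet).2 fun i _ => h0 i
        calc μ P ≤ μ ((⋂ i ∈ Finset.range n, X i ⁻¹' D) ∪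
              ⋃ i ∈ Finset.range n, (P ∩ (X i ⁻¹' D)ᶜ)) := measure_mono hsub
          _ ≤ μ (⋂ i ∈ Finset.range n, X i ⁻¹' D) +
              μ (⋃ i ∈ Finset.range n, (P ∩ (X i ⁻¹' D)ᶜ)) := measure_union_le _ _
          _ = q ^ n := by rw [hU, add_zero, hpow n]
      have hP0 : μ P ≤ 0 :=
        ge_of_tendsto (ENNReal.tendsto_pow_atTop_nhds_zero_of_lt_one hq1)
          (Filter.Eventually.of_forall hble)
      exact absurd (le_zero_iff.1 hP0) hP.ne'
  -- construct the injective family of pairs from `g ≠ 1`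
  have hg' : g.1 ≠ 1 ∨ g.2 ≠ 1 := by
    by_contra hcon
    push_neg at hcon
    exact hg (Prod.ext hcon.1 hcon.2)
  rcases hg' with h1 | h1
  · obtain ⟨x, hx⟩ := exists_pairSeq h1
    refine key (fun qq => Sum.inl (cond qq.2 (g.1 * x qq.1) (x qq.1)))
      (fun a b e => hx (Sum.inl_injective e)) (fun i => rfl)
  · obtain ⟨x, hx⟩ := exists_pairSeq h1
    refine key (fun qq => Sum.inr (cond qq.2 (g.2 * x qq.1) (x qq.1)))
      (fun a b e => hx (Sum.inr_injective e)) (fun i => rfl)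
end

section
/- Let Γ be a group with a measure-preserving action β on (X₀, μ₀), and let Γ act on (X, μ) diagonally by (γ • x)_h = β_γ(x_h) for h ∈ H; this diagonal action commutes with the Bernoulli shift π. If there exists a bounded measurable Γ-invariant function f₀ : X₀ → ℂ that is not μ₀-a.e. constant, then for every h ∈ H with h ≠ e there exists a bounded measurable function F : X → ℂ invariant under the diagonal Γ-action such that F ∘ π_h is not μ-a.e. equal to F. -/
open MeasureTheory Filter

/-- Let `Γ` act on `(X₀, μ₀)` by a measure-preserving action `β`, and
diagonally on `(X, μ) = ∏_{h ∈ H}(X₀, μ₀)` by `(γ • x)_h = β_γ(x_h)`. If there is a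
bounded measurable `Γ`-invariant `f₀ : X₀ → ℂ` that is not a.e. constant, then for every
`h ≠ e` in `H` there is a bounded measurable `F : X → ℂ`, invariant under the diagonal
`Γ`-action, such that `F ∘ π_h` is not a.e. equal to `F`. -/
theorem stmt_14 {H X₀ Γ : Type*} [Group H] [Countable H] [Group Γ]
    [MeasurableSpace X₀] (μ₀ : Measure X₀) [IsProbabilityMeasure μ₀]
    (μ : Measure (H → X₀)) (hμ : IsBernoulliProduct μ₀ μ)
    (β : Γ → X₀ → X₀)
    (hβ_one : β 1 = id)
    (hβ_mul : ∀ γ γ' : Γ, β (γ * γ') = β γ ∘ β γ')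
    (hβ_mp : ∀ γ : Γ, MeasurePreserving (β γ) μ₀ μ₀)
    (hf₀ : ∃ f₀ : X₀ → ℂ, Measurable f₀ ∧ (∃ M : ℝ, ∀ x, ‖f₀ x‖ ≤ M) ∧
      (∀ γ : Γ, (fun x => f₀ (β γ x)) =ᵐ[μ₀] f₀) ∧
      ¬ ∃ c : ℂ, f₀ =ᵐ[μ₀] fun _ => c) :
    ∀ h : H, h ≠ 1 →
      ∃ F : (H → X₀) → ℂ, Measurable F ∧ (∃ M : ℝ, ∀ x, ‖F x‖ ≤ M) ∧
        (∀ γ : Γ, (fun x => F (fun h' => β γ (x h'))) =ᵐ[μ] F) ∧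
        ¬ ((fun x => F (bernoulliShift h x)) =ᵐ[μ] F) := by
  classical
  obtain ⟨f₀, hf_meas, ⟨M, hM⟩, hf_inv, hf_nc⟩ := hf₀
  obtain ⟨hμprob, hμprod⟩ := hμ
  intro h hh
  -- coordinate maps are measure preserving
  have hev : ∀ g : H, MeasurePreserving (fun x : H → X₀ => x g) μ μ₀ := by
    intro g
    refine ⟨measurable_pi_apply g, ?_⟩
    ext E hE
    rw [Measure.map_apply (measurable_pi_apply g) hE]
    have := hμprod {g} (fun _ => E) (fun _ _ => hE)
    simp at this; exact this
  refine ⟨fun x => f₀ (x 1), hf_meas.comp (measurable_pi_apply 1),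
    ⟨M, fun x => hM _⟩, ?_, ?_⟩
  · intro γ
    exact (hev 1).quasiMeasurePreserving.ae_eq_comp (hf_inv γ)
  · intro hcon
    set a : H := h⁻¹ with ha
    have hane : a ≠ 1 := by simpa [ha] using hh
    have hF : (fun x : H → X₀ => f₀ (x a)) =ᵐ[μ] fun x => f₀ (x 1) := by
      simpa [bernoulliShift, ha] using hcon
    set T : (H → X₀) → X₀ × X₀ := fun x => (x a, x 1) with hT_def
    have hT : Measurable T := (measurable_pi_apply a).prodMk (measurable_pi_apply 1)
    have hmap : μ₀.prod μ₀ = Measure.map T μ := by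
      refine Measure.prod_eq ?_
      intro s t hs ht
      rw [Measure.map_apply hT (hs.prod ht)]
      have key := hμprod {a, 1} (fun g => if g = a then s else t) ?_
      · have hset : T ⁻¹' (s ×ˢ t) =
            {x : H → X₀ | ∀ g ∈ ({a, 1} : Finset H), x g ∈ (if g = a then s else t)} := by
          ext x
          simp [hT_def, Set.mem_prod, hane, Ne.symm hane]
        rw [hset, key, Finset.prod_pair hane]
        simp [hane, Ne.symm hane]
      · intro g _
        by_cases hga : g = a <;> simp [hga, hs, ht]
    have hAmeas : MeasurableSet {p : X₀ × X₀ | f₀ p.1 = f₀ p.2} :=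
      measurableSet_eq_fun (hf_meas.comp measurable_fst) (hf_meas.comp measurable_snd)
    have hprodae : ∀ᵐ p ∂(μ₀.prod μ₀), f₀ p.1 = f₀ p.2 := by
      rw [hmap]
      rw [ae_map_iff hT.aemeasurable hAmeas]
      exact hF
    have hae2 : ∀ᵐ x ∂μ₀, ∀ᵐ y ∂μ₀, f₀ x = f₀ y :=
      Measure.ae_ae_of_ae_prod hprodae
    obtain ⟨x, hx⟩ := hae2.exists
    exact hf_nc ⟨f₀ x, hx.mono fun y hy => hy.symm⟩
end
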